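/- arXiv:1808.06666 — 5 statements merged into one kernel-verified Lean document; each statement's English description precedes it below -/
import Mathlib

section
/- For every ε > 0 there exists δ > 0 (which may be taken to be Ω(ε)) such that for every graph G on n vertices: if itm(G) < (1 − ε)·n/3, then log₂ mis(G) < ((log₂ 3)/3 − δ)·n. -/
/-- A set of vertices is independent in `G` if it spans no edge. -/
def IsIndepSet {V : Type*} (G : SimpleGraph V) (s : Set V) : Prop :=
  ∀ ⦃x⦄, x ∈ s → ∀ ⦃y⦄, y ∈ s → ¬ G.Adj x y

/-- A maximal independent set. -/
def IsMaxIndepSet {V : Type*} (G : SimpleGraph V) (s : Set V) : Prop :=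
  IsIndepSet G s ∧ ∀ t, IsIndepSet G t → s ⊆ t → s = t

/-- `mis G` is the number of maximal independent sets of `G`. -/
noncomputable def mis {V : Type*} (G : SimpleGraph V) : ℕ :=
  Nat.card {s : Set V // IsMaxIndepSet G s}

/-- `S` induces a triangle matching: within `S`, every vertex has exactly two
neighbours, and these two neighbours are adjacent; so `G[S]` is a vertex-disjoint
union of triangles. -/
def IsInducedTriangleMatching {V : Type*} (G : SimpleGraph V) (S : Finset V) : Prop :=
  ∀ x ∈ S, ∃ y ∈ S, ∃ z ∈ S, G.Adj x y ∧ G.Adj x z ∧ G.Adj y z ∧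
    ∀ w ∈ S, G.Adj x w → w = y ∨ w = z

/-- `itm G`: the largest number of triangles in an induced triangle matching. -/
noncomputable def itm {V : Type*} (G : SimpleGraph V) : ℕ :=
  sSup {k | ∃ S : Finset V, S.card = 3 * k ∧ IsInducedTriangleMatching G S}

/-- `S` induces a matching: within `S`, every vertex has exactly one neighbour. -/
def IsInducedMatching {V : Type*} (G : SimpleGraph V) (S : Finset V) : Prop :=
  ∀ x ∈ S, ∃ y ∈ S, G.Adj x y ∧ ∀ z ∈ S, G.Adj x z → z = y

/-- `im G`: the largest number of edges in an induced matching. -/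
noncomputable def im {V : Type*} (G : SimpleGraph V) : ℕ :=
  sSup {k | ∃ S : Finset V, S.card = 2 * k ∧ IsInducedMatching G S}

/-- The neighbourhood of a set of vertices. -/
def nbhd {V : Type*} (G : SimpleGraph V) (S : Set V) : Set V :=
  {y | ∃ x ∈ S, G.Adj x y}

/-- A set `J` is irredundant if no member's neighbourhood is covered by the
neighbourhoods of the other members. -/
def Irredundant {V : Type*} (G : SimpleGraph V) (J : Set V) : Prop :=
  ∀ x ∈ J, ¬ (G.neighborSet x ⊆ nbhd G (J \ {x}))

/-- `irr G X`: the number of irredundant subsets of `X`. -/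
noncomputable def irr {V : Type*} (G : SimpleGraph V) (X : Set V) : ℕ :=
  Nat.card {J : Set V // J ⊆ X ∧ Irredundant G J}

/-!
Every maximal independent set meets the closed neighbourhood `N[v]` of any vertex `v`, and those
containing a given `x` correspond injectively to maximal independent sets of `G - N[x]`. Branching
on a vertex `v` of minimum degree `d` gives, by induction on vertex sets `A`,
`mis G[A] ≤ 3 ^ t * √2 ^ (|A| - 3 t)` with `t = itm G[A]`: for `d ≠ 2` because
`d + 1 ≤ √2 ^ (d + 1)`; for `d = 2` with `N(v) = {u, w}`, either `{v, u, w}` is a triangle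
component, which costs a factor `3` and raises `itm` by one, or branching on "`v`", "`u`",
"`w` but not `u`" deletes at least `3`, `3` and `4` vertices, and `2 √2 + 1 ≤ 4`. Taking `log₂`,
`log₂ mis G ≤ n / 2 + t (log₂ 3 - 3 / 2)`, so `t < (1 - ε) n / 3` gives the claim with
`δ = ε (log₂ 3 / 3 - 1 / 2)`.
-/

open Finset

lemma Nat.sq_le_two_pow_of_ne_three {n : ℕ} (h : n ≠ 3) : n ^ 2 ≤ 2 ^ n := by
  rcases lt_or_ge n 5 with hn | hn
  · interval_cases n <;> simp_all
  · induction n, hn using Nat.le_induction with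
    | base => norm_num
    | succ k hk ih => rw [pow_succ 2]; nlinarith [ih (by omega)]

lemma sqrt_two_pow_three : √2 ^ 3 = 2 * √2 := by
  rw [pow_succ, Real.sq_sqrt zero_le_two]

lemma one_le_three_div_sqrt_two_pow_three : 1 ≤ 3 / √2 ^ 3 := by
  rw [one_le_div (by positivity), sqrt_two_pow_three]
  linarith [Real.sqrt_two_lt_three_halves]

/-- `misBound n t = 3 ^ t * √2 ^ (n - 3 * t)`, written without subtraction in the exponent. -/
noncomputable def misBound (n t : ℕ) : ℝ := √2 ^ n * (3 / √2 ^ 3) ^ t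

lemma misBound_pos (n t : ℕ) : 0 < misBound n t := by
  unfold misBound; positivity

lemma one_le_misBound (n t : ℕ) : 1 ≤ misBound n t :=
  one_le_mul_of_one_le_of_one_le (one_le_pow₀ Real.one_lt_sqrt_two.le)
    (one_le_pow₀ one_le_three_div_sqrt_two_pow_three)

lemma misBound_mono_left {m n : ℕ} (h : m ≤ n) (t : ℕ) : misBound m t ≤ misBound n t := by
  unfold misBound
  gcongr
  exact Real.one_lt_sqrt_two.le

lemma misBound_mono_right (n : ℕ) {s t : ℕ} (h : s ≤ t) : misBound n s ≤ misBound n t := by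
  unfold misBound
  gcongr
  exact one_le_three_div_sqrt_two_pow_three

lemma misBound_add_left (n k t : ℕ) : misBound (n + k) t = √2 ^ k * misBound n t := by
  unfold misBound; ring

lemma misBound_add_three_succ (n t : ℕ) : misBound (n + 3) (t + 1) = 3 * misBound n t := by
  have h : √2 ^ 3 * (3 / √2 ^ 3) = 3 := mul_div_cancel₀ 3 (by positivity)
  unfold misBound
  rw [pow_add, pow_succ]
  linear_combination (√2 ^ n * (3 / √2 ^ 3) ^ t) * h

lemma succ_mul_misBound_le {d : ℕ} (hd : d ≠ 2) (m t : ℕ) :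
    (d + 1) * misBound m t ≤ misBound (m + (d + 1)) t := by
  have hsq : ((d + 1 : ℕ) : ℝ) ^ 2 ≤ (√2 ^ (d + 1)) ^ 2 := by
    rw [← pow_mul, mul_comm, pow_mul, Real.sq_sqrt zero_le_two]
    exact_mod_cast Nat.sq_le_two_pow_of_ne_three (by omega)
  have hle : ((d + 1 : ℕ) : ℝ) ≤ √2 ^ (d + 1) :=
    le_of_pow_le_pow_left₀ two_ne_zero (by positivity) hsq
  rw [misBound_add_left]
  push_cast at hle
  exact mul_le_mul_of_nonneg_right hle (misBound_pos m t).le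

lemma two_mul_misBound_succ_add_le (m t : ℕ) :
    2 * misBound (m + 1) t + misBound m t ≤ misBound (m + 4) t := by
  have h4 : √2 ^ 4 = 4 := by rw [show 4 = 2 * 2 by rfl, pow_mul, Real.sq_sqrt zero_le_two]; norm_num
  rw [misBound_add_left m 1, misBound_add_left m 4, h4, pow_one]
  nlinarith [Real.sqrt_two_lt_three_halves, misBound_pos m t]

lemma three_halves_lt_logb_two_three : 3 / 2 < Real.logb 2 3 := by
  have h : Real.logb 2 (2 ^ 3) < Real.logb 2 (3 ^ 2) :=
    Real.logb_lt_logb one_lt_two (by norm_num) (by norm_num)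
  rw [Real.logb_pow, Real.logb_pow, Real.logb_self_eq_one one_lt_two] at h
  push_cast at h
  linarith

lemma logb_misBound (n t : ℕ) :
    Real.logb 2 (misBound n t) = n / 2 + t * (Real.logb 2 3 - 3 / 2) := by
  have hsqrt : Real.logb 2 √2 = 1 / 2 := by
    rw [Real.sqrt_eq_rpow, Real.logb_rpow two_pos (by norm_num)]
  unfold misBound
  rw [Real.logb_mul (by positivity) (by positivity), Real.logb_pow, Real.logb_pow,
    Real.logb_div (by norm_num) (by positivity), Real.logb_pow, hsqrt]
  ring

section InducedTriangleMatching

variable {V : Type*} [DecidableEq V] {G : SimpleGraph V}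

lemma isInducedTriangleMatching_triangle {u v w : V} (huv : G.Adj u v) (huw : G.Adj u w)
    (hvw : G.Adj v w) : IsInducedTriangleMatching G {u, v, w} := by
  simp only [IsInducedTriangleMatching, mem_insert, mem_singleton, forall_eq_or_imp, forall_eq,
    exists_eq_or_imp, exists_eq_left]
  grind [SimpleGraph.Adj.symm, SimpleGraph.irrefl]

lemma IsInducedTriangleMatching.union {S T : Finset V} (hS : IsInducedTriangleMatching G S)
    (hT : IsInducedTriangleMatching G T) (hST : ∀ x ∈ S, ∀ y ∈ T, ¬ G.Adj x y) :
    IsInducedTriangleMatching G (S ∪ T) := by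
  have extend : ∀ {S T : Finset V}, IsInducedTriangleMatching G S →
      (∀ x ∈ S, ∀ y ∈ T, ¬ G.Adj x y) → ∀ x ∈ S, ∃ y ∈ S ∪ T, ∃ z ∈ S ∪ T,
        G.Adj x y ∧ G.Adj x z ∧ G.Adj y z ∧ ∀ w ∈ S ∪ T, G.Adj x w → w = y ∨ w = z := by
    intro S T hS hST x hx
    obtain ⟨y, hy, z, hz, hxy, hxz, hyz, hS⟩ := hS x hx
    refine ⟨y, mem_union_left _ hy, z, mem_union_left _ hz, hxy, hxz, hyz, fun w hw hxw => ?_⟩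
    rcases mem_union.1 hw with hw | hw
    · exact hS w hw hxw
    · exact absurd hxw (hST x hx w hw)
  intro x hx
  rcases mem_union.1 hx with hx | hx
  · exact extend hS hST x hx
  · rw [union_comm]
    exact extend hT (fun y hy x hx => fun h => hST x hx y hy h.symm) x hx

end InducedTriangleMatching

namespace SimpleGraph

variable {V : Type*} (G : SimpleGraph V)

def IsMaxIndepSetIn (A s : Finset V) : Prop :=
  s ⊆ A ∧ (∀ x ∈ s, ∀ y ∈ s, ¬ G.Adj x y) ∧ ∀ x ∈ A, x ∉ s → ∃ y ∈ s, G.Adj x y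

instance [DecidableEq V] [DecidableRel G.Adj] (A : Finset V) :
    DecidablePred (G.IsMaxIndepSetIn A) := fun _ => by
  unfold IsMaxIndepSetIn; infer_instance

def maxIndepSetsIn [DecidableEq V] [DecidableRel G.Adj] (A : Finset V) : Finset (Finset V) :=
  {s ∈ A.powerset | G.IsMaxIndepSetIn A s}

def misIn [DecidableEq V] [DecidableRel G.Adj] (A : Finset V) : ℕ := #(G.maxIndepSetsIn A)

noncomputable def itmIn (A : Finset V) : ℕ :=
  sSup {k | ∃ S ⊆ A, #S = 3 * k ∧ IsInducedTriangleMatching G S}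

def neighborsIn [DecidableRel G.Adj] (A : Finset V) (v : V) : Finset V := {x ∈ A | G.Adj v x}

def degIn [DecidableRel G.Adj] (A : Finset V) (v : V) : ℕ := #(G.neighborsIn A v)

def closedNbhdIn [DecidableEq V] [DecidableRel G.Adj] (A : Finset V) (v : V) : Finset V :=
  insert v (G.neighborsIn A v)

variable {G} {A B S T s : Finset V} {a u v w x : V} {k : ℕ}

lemma mem_neighborsIn [DecidableRel G.Adj] : x ∈ G.neighborsIn A v ↔ x ∈ A ∧ G.Adj v x :=
  mem_filter

lemma bddAbove_setOf_isInducedTriangleMatching (A : Finset V) :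
    BddAbove {k | ∃ S ⊆ A, #S = 3 * k ∧ IsInducedTriangleMatching G S} :=
  ⟨#A, fun k ⟨S, hS, hk, _⟩ => by have := card_le_card hS; omega⟩

lemma exists_isInducedTriangleMatching_card_eq_itmIn (A : Finset V) :
    ∃ S ⊆ A, #S = 3 * G.itmIn A ∧ IsInducedTriangleMatching G S :=
  Nat.sSup_mem (s := {k | ∃ S ⊆ A, #S = 3 * k ∧ IsInducedTriangleMatching G S})
    ⟨0, ∅, empty_subset _, rfl, by simp [IsInducedTriangleMatching]⟩
    (bddAbove_setOf_isInducedTriangleMatching A)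

lemma le_itmIn (hS : S ⊆ A) (hcard : #S = 3 * k) (h : IsInducedTriangleMatching G S) :
    k ≤ G.itmIn A :=
  le_csSup (bddAbove_setOf_isInducedTriangleMatching A) ⟨S, hS, hcard, h⟩

lemma itmIn_mono (h : A ⊆ B) : G.itmIn A ≤ G.itmIn B := by
  obtain ⟨S, hS, hcard, hS'⟩ := exists_isInducedTriangleMatching_card_eq_itmIn (G := G) A
  exact le_itmIn (hS.trans h) hcard hS'

section DecidableEq

variable [DecidableEq V]

lemma itmIn_sdiff_add_le (hTA : T ⊆ A) (hcard : #T = 3 * k) (hT : IsInducedTriangleMatching G T)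
    (hsep : ∀ x ∈ A \ T, ∀ y ∈ T, ¬ G.Adj x y) : G.itmIn (A \ T) + k ≤ G.itmIn A := by
  obtain ⟨S, hS, hScard, hS'⟩ := exists_isInducedTriangleMatching_card_eq_itmIn (G := G) (A \ T)
  refine le_itmIn (union_subset (hS.trans sdiff_subset) hTA) ?_
    (hS'.union hT fun x hx => hsep x (hS hx))
  rw [card_union_of_disjoint (disjoint_of_subset_left hS sdiff_disjoint), hScard, hcard, mul_add]

lemma IsMaxIndepSetIn.sdiff (hs : G.IsMaxIndepSetIn A s) (hB : Disjoint B s) :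
    G.IsMaxIndepSetIn (A \ B) s :=
  ⟨subset_sdiff.2 ⟨hs.1, hB.symm⟩, hs.2.1, fun x hx => hs.2.2 x (mem_sdiff.1 hx).1⟩

variable [DecidableRel G.Adj]

lemma mem_maxIndepSetsIn : s ∈ G.maxIndepSetsIn A ↔ G.IsMaxIndepSetIn A s := by
  simp only [maxIndepSetsIn, mem_filter, mem_powerset, and_iff_right_iff_imp]
  exact fun h => h.1

lemma misIn_le_two_pow (A : Finset V) : G.misIn A ≤ 2 ^ #A :=
  (card_filter_le _ _).trans (card_powerset A).le

lemma mem_closedNbhdIn : x ∈ G.closedNbhdIn A v ↔ x = v ∨ x ∈ A ∧ G.Adj v x := by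
  rw [closedNbhdIn, mem_insert, mem_neighborsIn]

lemma card_closedNbhdIn (A : Finset V) (v : V) : #(G.closedNbhdIn A v) = G.degIn A v + 1 :=
  card_insert_of_notMem fun h => G.irrefl (mem_neighborsIn.1 h).2

lemma closedNbhdIn_subset (hv : v ∈ A) : G.closedNbhdIn A v ⊆ A :=
  insert_subset hv (filter_subset _ _)

lemma card_sdiff_closedNbhdIn (hv : v ∈ A) :
    #(A \ G.closedNbhdIn A v) + G.degIn A v + 1 = #A := by
  rw [add_assoc, ← card_closedNbhdIn, card_sdiff_add_card_eq_card (closedNbhdIn_subset hv)]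

lemma sdiff_closedNbhdIn_ssubset (hv : v ∈ A) : A \ G.closedNbhdIn A v ⊂ A :=
  sdiff_ssubset (closedNbhdIn_subset hv) ⟨v, mem_insert_self _ _⟩

lemma IsMaxIndepSetIn.exists_mem_closedNbhdIn (hs : G.IsMaxIndepSetIn A s) (hv : v ∈ A) :
    ∃ x ∈ G.closedNbhdIn A v, x ∈ s := by
  by_cases hvs : v ∈ s
  · exact ⟨v, mem_insert_self _ _, hvs⟩
  · obtain ⟨y, hy, hvy⟩ := hs.2.2 v hv hvs
    exact ⟨y, mem_closedNbhdIn.2 (Or.inr ⟨hs.1 hy, hvy⟩), hy⟩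

lemma IsMaxIndepSetIn.erase (hs : G.IsMaxIndepSetIn A s) (ha : a ∈ s) :
    G.IsMaxIndepSetIn (A \ G.closedNbhdIn A a) (s.erase a) := by
  obtain ⟨hsA, hind, hdom⟩ := hs
  refine ⟨fun x hx => ?_, fun x hx y hy => hind x (mem_of_mem_erase hx) y (mem_of_mem_erase hy),
    fun x hx hxs => ?_⟩
  · obtain ⟨hxa, hxs⟩ := mem_erase.1 hx
    refine mem_sdiff.2 ⟨hsA hxs, fun hN => ?_⟩
    rcases mem_closedNbhdIn.1 hN with rfl | ⟨-, hax⟩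
    exacts [hxa rfl, hind a ha x hxs hax]
  · obtain ⟨hxA, hxN⟩ := mem_sdiff.1 hx
    have hxa : x ≠ a := fun h => hxN (mem_closedNbhdIn.2 (Or.inl h))
    obtain ⟨y, hy, hxy⟩ := hdom x hxA fun h => hxs (mem_erase.2 ⟨hxa, h⟩)
    refine ⟨y, mem_erase.2 ⟨?_, hy⟩, hxy⟩
    rintro rfl
    exact hxN (mem_closedNbhdIn.2 (Or.inr ⟨hxA, hxy.symm⟩))

lemma card_filter_mem_disjoint_le (a : V) (B : Finset V) :
    #{s ∈ G.maxIndepSetsIn A | a ∈ s ∧ Disjoint B s} ≤ G.misIn ((A \ G.closedNbhdIn A a) \ B) := by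
  refine card_le_card_of_injOn (fun s => s.erase a) (fun s hs => ?_) (fun s hs t ht hst => ?_)
  · obtain ⟨hsA, has, hB⟩ := mem_filter.1 hs
    exact mem_maxIndepSetsIn.2 (((mem_maxIndepSetsIn.1 hsA).erase has).sdiff
      (hB.mono_right (erase_subset a s)))
  · simp only [coe_filter, Set.mem_ofPred_eq] at hs ht
    rw [← insert_erase hs.2.1, ← insert_erase ht.2.1]
    exact congrArg (insert a) hst

lemma card_filter_mem_le (a : V) :
    #{s ∈ G.maxIndepSetsIn A | a ∈ s} ≤ G.misIn (A \ G.closedNbhdIn A a) := by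
  simpa using card_filter_mem_disjoint_le (G := G) (A := A) a ∅

lemma misIn_le_sum_closedNbhdIn (hv : v ∈ A) :
    G.misIn A ≤ ∑ x ∈ G.closedNbhdIn A v, G.misIn (A \ G.closedNbhdIn A x) := by
  have hcover : G.maxIndepSetsIn A ⊆
      (G.closedNbhdIn A v).biUnion fun x => {s ∈ G.maxIndepSetsIn A | x ∈ s} := by
    intro s hs
    obtain ⟨x, hx, hxs⟩ := (mem_maxIndepSetsIn.1 hs).exists_mem_closedNbhdIn hv
    exact mem_biUnion.2 ⟨x, hx, mem_filter.2 ⟨hs, hxs⟩⟩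
  exact (card_le_card hcover).trans <| card_biUnion_le.trans <|
    sum_le_sum fun x _ => card_filter_mem_le x

lemma misIn_le_of_neighborsIn_eq_pair (hv : v ∈ A) (hN : G.neighborsIn A v = {u, w}) :
    G.misIn A ≤ G.misIn (A \ G.closedNbhdIn A v) + G.misIn (A \ G.closedNbhdIn A u) +
      G.misIn ((A \ G.closedNbhdIn A w) \ {u}) := by
  have hcover : ∀ s ∈ G.maxIndepSetsIn A, v ∈ s ∨ u ∈ s ∨ (w ∈ s ∧ Disjoint {u} s) := by
    intro s hs
    obtain ⟨x, hx, hxs⟩ := (mem_maxIndepSetsIn.1 hs).exists_mem_closedNbhdIn hv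
    rw [closedNbhdIn, hN] at hx
    simp only [mem_insert, mem_singleton] at hx
    rcases hx with rfl | rfl | rfl
    · exact Or.inl hxs
    · exact Or.inr (Or.inl hxs)
    · by_cases hu : u ∈ s
      · exact Or.inr (Or.inl hu)
      · exact Or.inr (Or.inr ⟨hxs, disjoint_singleton_left.2 hu⟩)
  calc G.misIn A = #{s ∈ G.maxIndepSetsIn A | v ∈ s ∨ u ∈ s ∨ (w ∈ s ∧ Disjoint {u} s)} := by
        rw [filter_true_of_mem hcover, misIn]
    _ ≤ #{s ∈ G.maxIndepSetsIn A | v ∈ s} + #{s ∈ G.maxIndepSetsIn A | u ∈ s} +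
        #{s ∈ G.maxIndepSetsIn A | w ∈ s ∧ Disjoint {u} s} := by
        rw [filter_or, filter_or, add_assoc]
        exact (card_union_le _ _).trans (by gcongr; exact card_union_le _ _)
    _ ≤ _ := add_le_add_three (card_filter_mem_le v) (card_filter_mem_le u)
        (card_filter_mem_disjoint_le w {u})

lemma le_misBound_of_ssubset (ih : ∀ B ⊂ A, (G.misIn B : ℝ) ≤ misBound #B (G.itmIn B))
    (hB : B ⊂ A) (hk : #B ≤ k) : (G.misIn B : ℝ) ≤ misBound k (G.itmIn A) :=
  (ih B hB).trans <| (misBound_mono_right _ (itmIn_mono hB.subset)).trans (misBound_mono_left hk _)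

lemma misIn_le_misBound_of_degIn_ne_two
    (ih : ∀ B ⊂ A, (G.misIn B : ℝ) ≤ misBound #B (G.itmIn B)) (hv : v ∈ A)
    (hmin : ∀ x ∈ A, G.degIn A v ≤ G.degIn A x) (hd : G.degIn A v ≠ 2) :
    (G.misIn A : ℝ) ≤ misBound #A (G.itmIn A) := by
  set d := G.degIn A v
  have hA := card_sdiff_closedNbhdIn (G := G) hv
  have hbranch : ∀ x ∈ G.closedNbhdIn A v,
      (G.misIn (A \ G.closedNbhdIn A x) : ℝ) ≤ misBound (#A - (d + 1)) (G.itmIn A) := by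
    intro x hx
    have hxA := closedNbhdIn_subset hv hx
    have := card_sdiff_closedNbhdIn (G := G) hxA
    have := hmin x hxA
    exact le_misBound_of_ssubset ih (sdiff_closedNbhdIn_ssubset hxA) (by omega)
  calc (G.misIn A : ℝ) ≤ ∑ x ∈ G.closedNbhdIn A v, (G.misIn (A \ G.closedNbhdIn A x) : ℝ) := by
        exact_mod_cast misIn_le_sum_closedNbhdIn hv
    _ ≤ (d + 1) * misBound (#A - (d + 1)) (G.itmIn A) := by
        simpa [card_closedNbhdIn] using sum_le_card_nsmul _ _ _ hbranch
    _ ≤ misBound (#A - (d + 1) + (d + 1)) (G.itmIn A) := succ_mul_misBound_le hd _ _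
    _ = misBound #A (G.itmIn A) := by rw [Nat.sub_add_cancel (by omega)]

lemma closedNbhdIn_eq_of_isolated_triangle (hv : v ∈ A) (hu : u ∈ A) (hw : w ∈ A)
    (hvu : G.Adj v u) (hvw : G.Adj v w) (huw : G.Adj u w)
    (hdeg : ∀ x ∈ ({v, u, w} : Finset V), G.degIn A x = 2) :
    ∀ x ∈ ({v, u, w} : Finset V), G.closedNbhdIn A x = {v, u, w} := by
  have hsub : ∀ x ∈ ({v, u, w} : Finset V), {v, u, w} ⊆ G.closedNbhdIn A x := by
    simp only [mem_insert, mem_singleton, insert_subset_iff, singleton_subset_iff,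
      mem_closedNbhdIn]
    rintro x (rfl | rfl | rfl) <;> simp_all [hvu.symm, hvw.symm, huw.symm]
  intro x hx
  refine (eq_of_subset_of_card_le (hsub x hx) ?_).symm
  rw [card_closedNbhdIn, hdeg x hx, card_eq_three.2 ⟨v, u, w, hvu.ne, hvw.ne, huw.ne, rfl⟩]

lemma misIn_le_misBound_of_isolated_triangle
    (ih : ∀ B ⊂ A, (G.misIn B : ℝ) ≤ misBound #B (G.itmIn B)) (hv : v ∈ A)
    (hvu : G.Adj v u) (hvw : G.Adj v w) (huw : G.Adj u w)
    (hN : ∀ x ∈ ({v, u, w} : Finset V), G.closedNbhdIn A x = {v, u, w}) :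
    (G.misIn A : ℝ) ≤ misBound #A (G.itmIn A) := by
  set T : Finset V := {v, u, w}
  have hvT : v ∈ T := mem_insert_self _ _
  have hTA : T ⊆ A := hN v hvT ▸ closedNbhdIn_subset hv
  have hT : #T = 3 := card_eq_three.2 ⟨v, u, w, hvu.ne, hvw.ne, huw.ne, rfl⟩
  have hsep : ∀ x ∈ A \ T, ∀ y ∈ T, ¬ G.Adj x y := fun x hx y hy hxy =>
    (mem_sdiff.1 hx).2 (hN y hy ▸ mem_closedNbhdIn.2 (Or.inr ⟨(mem_sdiff.1 hx).1, hxy.symm⟩))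
  have hitm : G.itmIn (A \ T) + 1 ≤ G.itmIn A :=
    itmIn_sdiff_add_le hTA hT (isInducedTriangleMatching_triangle hvu hvw huw) hsep
  have hmis : G.misIn A ≤ 3 * G.misIn (A \ T) := by
    have := misIn_le_sum_closedNbhdIn (G := G) hv
    rwa [hN v hvT, sum_congr rfl fun x hx => by rw [hN x hx], sum_const, hT, smul_eq_mul] at this
  have hA : #(A \ T) + 3 = #A := hT ▸ card_sdiff_add_card_eq_card hTA
  calc (G.misIn A : ℝ) ≤ 3 * G.misIn (A \ T) := by exact_mod_cast hmis
    _ ≤ 3 * misBound #(A \ T) (G.itmIn (A \ T)) := by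
        gcongr; exact ih _ (sdiff_ssubset hTA ⟨v, hvT⟩)
    _ = misBound (#(A \ T) + 3) (G.itmIn (A \ T) + 1) := (misBound_add_three_succ _ _).symm
    _ ≤ misBound #A (G.itmIn A) := hA ▸ misBound_mono_right _ hitm

lemma card_sdiff_closedNbhdIn_add_four_le (hu : u ∈ A) (hw : w ∈ A) (hne : u ≠ w)
    (hdu : 2 ≤ G.degIn A u) (hdw : 2 ≤ G.degIn A w)
    (hnot : ¬ (G.Adj u w ∧ G.degIn A u = 2 ∧ G.degIn A w = 2)) :
    #(A \ G.closedNbhdIn A u) + 4 ≤ #A ∨ #((A \ G.closedNbhdIn A w) \ {u}) + 4 ≤ #A := by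
  have hcu := card_sdiff_closedNbhdIn (G := G) hu
  have hcw := card_sdiff_closedNbhdIn (G := G) hw
  by_cases huw : G.Adj u w
  · have := not_and.1 hnot huw
    have := card_le_card (sdiff_subset (s := A \ G.closedNbhdIn A w) (t := {u}))
    omega
  · have huN : {u} ⊆ A \ G.closedNbhdIn A w := singleton_subset_iff.2 <| mem_sdiff.2
      ⟨hu, fun h => (mem_closedNbhdIn.1 h).elim hne fun h => huw h.2.symm⟩
    have := card_sdiff_add_card_eq_card huN
    rw [card_singleton] at this
    omega

lemma misIn_le_misBound_of_neighborsIn_eq_pair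
    (ih : ∀ B ⊂ A, (G.misIn B : ℝ) ≤ misBound #B (G.itmIn B)) (hv : v ∈ A)
    (hmin : ∀ x ∈ A, G.degIn A v ≤ G.degIn A x) (hd : G.degIn A v = 2)
    (hN : G.neighborsIn A v = {u, w}) (hu : u ∈ A) (hw : w ∈ A)
    (hsmall : #(A \ G.closedNbhdIn A u) + 4 ≤ #A ∨ #((A \ G.closedNbhdIn A w) \ {u}) + 4 ≤ #A) :
    (G.misIn A : ℝ) ≤ misBound #A (G.itmIn A) := by
  have hcv := card_sdiff_closedNbhdIn (G := G) hv
  have hcu := card_sdiff_closedNbhdIn (G := G) hu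
  have hcw := card_sdiff_closedNbhdIn (G := G) hw
  have hcw' := card_le_card (sdiff_subset (s := A \ G.closedNbhdIn A w) (t := {u}))
  have hdu := hmin u hu
  have hdw := hmin w hw
  set t := G.itmIn A
  have hv' : (G.misIn (A \ G.closedNbhdIn A v) : ℝ) ≤ misBound (#A - 4 + 1) t :=
    le_misBound_of_ssubset ih (sdiff_closedNbhdIn_ssubset hv) (by omega)
  have hu' : ∀ k, #(A \ G.closedNbhdIn A u) ≤ k →
      (G.misIn (A \ G.closedNbhdIn A u) : ℝ) ≤ misBound k t :=
    fun k => le_misBound_of_ssubset ih (sdiff_closedNbhdIn_ssubset hu)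
  have hw' : ∀ k, #((A \ G.closedNbhdIn A w) \ {u}) ≤ k →
      (G.misIn ((A \ G.closedNbhdIn A w) \ {u}) : ℝ) ≤ misBound k t :=
    fun k => le_misBound_of_ssubset ih (sdiff_subset.trans_ssubset (sdiff_closedNbhdIn_ssubset hw))
  have hbranch : (G.misIn A : ℝ) ≤ G.misIn (A \ G.closedNbhdIn A v) +
      G.misIn (A \ G.closedNbhdIn A u) + G.misIn ((A \ G.closedNbhdIn A w) \ {u}) := by
    exact_mod_cast misIn_le_of_neighborsIn_eq_pair hv hN
  have hbound := two_mul_misBound_succ_add_le (#A - 4) t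
  rw [Nat.sub_add_cancel (by omega : 4 ≤ #A)] at hbound
  rcases hsmall with hsmall | hsmall
  · linarith [hu' (#A - 4) (by omega), hw' (#A - 4 + 1) (by omega)]
  · linarith [hu' (#A - 4 + 1) (by omega), hw' (#A - 4) (by omega)]

lemma misIn_le_misBound_of_degIn_eq_two
    (ih : ∀ B ⊂ A, (G.misIn B : ℝ) ≤ misBound #B (G.itmIn B)) (hv : v ∈ A)
    (hmin : ∀ x ∈ A, G.degIn A v ≤ G.degIn A x) (hd : G.degIn A v = 2) :
    (G.misIn A : ℝ) ≤ misBound #A (G.itmIn A) := by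
  obtain ⟨u, w, hne, hN⟩ := card_eq_two.1 hd
  obtain ⟨hu, hvu⟩ := mem_neighborsIn.1 (hN ▸ mem_insert_self u {w} : u ∈ G.neighborsIn A v)
  obtain ⟨hw, hvw⟩ := mem_neighborsIn.1
    (hN ▸ mem_insert_of_mem (mem_singleton_self w) : w ∈ G.neighborsIn A v)
  by_cases htri : G.Adj u w ∧ G.degIn A u = 2 ∧ G.degIn A w = 2
  · refine misIn_le_misBound_of_isolated_triangle ih hv hvu hvw htri.1
      (closedNbhdIn_eq_of_isolated_triangle hv hu hw hvu hvw htri.1 ?_)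
    simp only [mem_insert, mem_singleton]
    rintro x (rfl | rfl | rfl) <;> simp [hd, htri]
  · exact misIn_le_misBound_of_neighborsIn_eq_pair ih hv hmin hd hN hu hw
      (card_sdiff_closedNbhdIn_add_four_le hu hw hne (hd ▸ hmin u hu) (hd ▸ hmin w hw) htri)

theorem misIn_le_misBound (A : Finset V) : (G.misIn A : ℝ) ≤ misBound #A (G.itmIn A) := by
  induction A using Finset.strongInduction with
  | H A ih =>
  obtain rfl | hA := A.eq_empty_or_nonempty
  · calc (G.misIn ∅ : ℝ) ≤ 1 := by exact_mod_cast misIn_le_two_pow (G := G) ∅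
      _ ≤ _ := one_le_misBound _ _
  obtain ⟨v, hv, hmin⟩ := exists_min_image A (G.degIn A) hA
  by_cases hd : G.degIn A v = 2
  · exact misIn_le_misBound_of_degIn_eq_two ih hv hmin hd
  · exact misIn_le_misBound_of_degIn_ne_two ih hv hmin hd

end DecidableEq

end SimpleGraph

section

variable {V : Type*} {G : SimpleGraph V}

lemma IsMaxIndepSet.isMaxIndepSetIn_univ [Fintype V] {s : Set V} (hs : IsMaxIndepSet G s) :
    G.IsMaxIndepSetIn univ s.toFinite.toFinset := by
  simp only [SimpleGraph.IsMaxIndepSetIn, Set.Finite.mem_toFinset, subset_univ, mem_univ,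
    true_and, forall_const]
  refine ⟨fun x hx y hy => hs.1 hx hy, fun x hxs => ?_⟩
  by_contra! h
  have hind : IsIndepSet G (insert x s) := by
    simp only [IsIndepSet, Set.mem_insert_iff, forall_eq_or_imp, G.irrefl, not_false_eq_true,
      true_and]
    exact ⟨h, fun y hy => ⟨fun hyx => h y hy hyx.symm, fun z hz => hs.1 hy hz⟩⟩
  exact hxs (hs.2 _ hind (Set.subset_insert x s) ▸ Set.mem_insert x s)

lemma mis_le_misIn_univ [Fintype V] [DecidableEq V] [DecidableRel G.Adj] :
    mis G ≤ G.misIn univ := by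
  have hinj : Function.Injective fun s : {s : Set V // IsMaxIndepSet G s} =>
      (⟨s.1.toFinite.toFinset, SimpleGraph.mem_maxIndepSetsIn.2 s.2.isMaxIndepSetIn_univ⟩ :
        G.maxIndepSetsIn univ) :=
    fun s t h => Subtype.ext (Set.Finite.toFinset_inj.1 (congrArg Subtype.val h))
  exact (Nat.card_le_card_of_injective _ hinj).trans_eq (Nat.card_eq_finsetCard _)

lemma itm_eq_itmIn_univ [Fintype V] : itm G = G.itmIn univ := by
  simp [itm, SimpleGraph.itmIn]

lemma logb_mis_le [Fintype V] :
    Real.logb 2 (mis G) ≤ Fintype.card V / 2 + itm G * (Real.logb 2 3 - 3 / 2) := by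
  classical
  have hmis : (mis G : ℝ) ≤ misBound (Fintype.card V) (itm G) := by
    rw [itm_eq_itmIn_univ, ← card_univ]
    exact (Nat.cast_le.2 mis_le_misIn_univ).trans (G.misIn_le_misBound univ)
  rw [← logb_misBound]
  rcases (mis G).eq_zero_or_pos with h | h
  · rw [h, Nat.cast_zero, Real.logb_zero]
    exact Real.logb_nonneg one_lt_two (one_le_misBound _ _)
  · exact Real.logb_le_logb_of_le one_lt_two (by exact_mod_cast h) hmis

end

theorem stability_itm :
    ∃ c : ℝ, 0 < c ∧ ∀ ε : ℝ, 0 < ε → ∃ δ : ℝ, 0 < δ ∧ c * ε ≤ δ ∧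
      ∀ (V : Type) [Fintype V] (G : SimpleGraph V),
        (itm G : ℝ) < (1 - ε) * (Fintype.card V : ℝ) / 3 →
        Real.logb 2 (mis G) < (Real.logb 2 3 / 3 - δ) * (Fintype.card V : ℝ) := by
  have hL := three_halves_lt_logb_two_three
  have hc : 0 < Real.logb 2 3 / 3 - 1 / 2 := by linarith
  refine ⟨_, hc, fun ε hε => ⟨_, mul_pos hc hε, le_rfl, fun V _ G hG => ?_⟩⟩
  calc Real.logb 2 (mis G) ≤ Fintype.card V / 2 + itm G * (Real.logb 2 3 - 3 / 2) := logb_mis_le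
    _ < _ := by linarith [mul_lt_mul_of_pos_right hG (sub_pos.2 hL)]
end

section
/- For every ε > 0 there exists δ > 0 (which may be taken to be Ω(ε)) such that for every triangle-free graph G on n vertices: if im(G) < (1 − ε)·n/2, then log₂ mis(G) < (1/2 − δ)·n. -/
/-!
For a vertex set `A` of a triangle-free graph, `mis(G[A]) ≤ 2 ^ (0.49 |A| + 0.02 im(G[A]))`, by
induction on `|A|`; for `A = V` and `im(G) < (1 - ε) n / 2` this gives
`log₂ mis(G) < (1/2 - ε/100) n`.

Branch at a vertex `v` of minimum degree `d` in `G[A]`. If `v` and its neighbour `u` span an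
isolated edge, every maximal independent set contains exactly one of them and the rest is a
maximal independent set of `A \ {u, v}`, which has one induced matching edge less. Otherwise a
maximal independent set contains either `v`, or a first neighbour `uᵢ` of `v` (in some order),
and then none of `u₁, …, uᵢ₋₁`. The neighbours of `v` are pairwise non-adjacent and have degree
at least `max d 2` (for `d = 1` because the edge is not isolated), so this removes at least
`max d 2 + i` vertices. Since `2 ^ (-0.49) ≤ 0.713`, the branching sum
`0.713 ^ (d + 1) + ∑ᵢ 0.713 ^ (max d 2 + i)` is at most `1`.
-/

open Finset

namespace MaxIndepCount

open scoped Classical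

noncomputable section

variable {V : Type*} {G : SimpleGraph V}

def nbrIn (G : SimpleGraph V) (A : Finset V) (u : V) : Finset V := {w ∈ A | G.Adj u w}

def IsMaxIndepIn (G : SimpleGraph V) (A s : Finset V) : Prop :=
  s ⊆ A ∧ IsIndepSet G s ∧ ∀ z ∈ A, z ∉ s → ∃ y ∈ s, G.Adj z y

def maxIndepIn (G : SimpleGraph V) (A : Finset V) : Finset (Finset V) :=
  {s ∈ A.powerset | IsMaxIndepIn G A s}

def imIn (G : SimpleGraph V) (A : Finset V) : ℕ :=
  sSup {k | ∃ S ⊆ A, #S = 2 * k ∧ IsInducedMatching G S}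

lemma mem_nbrIn {A : Finset V} {u w : V} : w ∈ nbrIn G A u ↔ w ∈ A ∧ G.Adj u w :=
  mem_filter

lemma nbrIn_subset (A : Finset V) (u : V) : nbrIn G A u ⊆ A := filter_subset _ _

lemma isIndepSet_nbrIn (hG : G.CliqueFree 3) (A : Finset V) (v : V) :
    IsIndepSet G (nbrIn G A v) := fun a ha b hb hab =>
  hG {v, a, b} (SimpleGraph.is3Clique_triple_iff.2 ⟨(mem_nbrIn.1 ha).2, (mem_nbrIn.1 hb).2, hab⟩)

lemma mem_maxIndepIn {A s : Finset V} : s ∈ maxIndepIn G A ↔ IsMaxIndepIn G A s := by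
  simp only [maxIndepIn, mem_filter, mem_powerset, and_iff_right_iff_imp]
  exact And.left

lemma IsMaxIndepIn.mem_of_disjoint_nbrIn {A s : Finset V} {v : V} (hs : IsMaxIndepIn G A s)
    (hv : v ∈ A) (hdisj : Disjoint (nbrIn G A v) s) : v ∈ s := by
  by_contra hvs
  obtain ⟨y, hys, hvy⟩ := hs.2.2 v hv hvs
  exact disjoint_left.1 hdisj (mem_nbrIn.2 ⟨hs.1 hys, hvy⟩) hys

lemma IsMaxIndepSet.isMaxIndepIn_toFinset [Fintype V] {s : Set V} (hs : IsMaxIndepSet G s) :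
    IsMaxIndepIn G univ s.toFinset := by
  refine ⟨subset_univ _, by simpa using hs.1, fun z _ hz => by_contra fun hno => ?_⟩
  push Not at hno
  simp only [Set.mem_toFinset] at hz hno
  have hind : IsIndepSet G (insert z s) := by
    rintro x (rfl | hx) y (rfl | hy)
    · exact G.irrefl
    · exact fun h => hno y hy h
    · exact fun h => hno x hx h.symm
    · exact hs.1 hx hy
  exact hz (hs.2 _ hind (Set.subset_insert z s) ▸ Set.mem_insert z s)

lemma mis_le_card_maxIndepIn_univ [Fintype V] (G : SimpleGraph V) :
    mis G ≤ #(maxIndepIn G univ) := by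
  rw [mis, ← Nat.card_eq_finsetCard]
  refine Nat.card_le_card_of_injective
    (fun s => ⟨s.1.toFinset, mem_maxIndepIn.2 (IsMaxIndepSet.isMaxIndepIn_toFinset s.2)⟩)
    fun s t hst => Subtype.ext (Set.toFinset_inj.1 (congrArg Subtype.val hst))

lemma card_filter_mem_disjoint_le {A F : Finset V} {u : V}
    (hF : ∀ f ∈ F, f ≠ u ∧ ¬ G.Adj u f) :
    #{s ∈ maxIndepIn G A | u ∈ s ∧ Disjoint F s} ≤
      #(maxIndepIn G (A \ (insert u (nbrIn G A u) ∪ F))) := by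
  refine card_le_card_of_injOn (fun s => s.erase u) ?_ ?_
  · intro s hs
    simp only [coe_filter, Set.mem_ofPred_eq, mem_maxIndepIn] at hs
    obtain ⟨⟨hsA, hind, hdom⟩, hus, hFs⟩ := hs
    simp only [mem_coe, mem_maxIndepIn]
    refine ⟨fun x hx => ?_, fun x hx y hy => hind (mem_erase.1 hx).2 (mem_erase.1 hy).2, ?_⟩
    · obtain ⟨hxu, hxs⟩ := mem_erase.1 hx
      simp only [mem_sdiff, mem_union, mem_insert, mem_nbrIn, not_or]
      exact ⟨hsA hxs, ⟨hxu, fun h => hind hus hxs h.2⟩, fun h => disjoint_left.1 hFs h hxs⟩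
    · intro z hz hzs
      simp only [mem_sdiff, mem_union, mem_insert, mem_nbrIn, not_or] at hz
      obtain ⟨hzA, ⟨hzu, hnuz⟩, -⟩ := hz
      obtain ⟨y, hys, hzy⟩ := hdom z hzA (fun h => hzs (mem_erase.2 ⟨hzu, h⟩))
      refine ⟨y, mem_erase.2 ⟨?_, hys⟩, hzy⟩
      rintro rfl
      exact hnuz ⟨hzA, hzy.symm⟩
  · intro s₁ h₁ s₂ h₂ he
    simp only [coe_filter, Set.mem_ofPred_eq] at h₁ h₂
    rw [← insert_erase h₁.2.1, ← insert_erase h₂.2.1]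
    exact congrArg (insert u) he

lemma card_filter_mem_le (A : Finset V) (u : V) :
    #{s ∈ maxIndepIn G A | u ∈ s} ≤ #(maxIndepIn G (A \ insert u (nbrIn G A u))) := by
  simpa using card_filter_mem_disjoint_le (G := G) (A := A) (F := ∅) (u := u) (by simp)

lemma card_filter_disjoint_eq_add (A T : Finset V) (a : V) :
    #{s ∈ maxIndepIn G A | Disjoint T s} =
      #{s ∈ maxIndepIn G A | Disjoint (insert a T) s} +
        #{s ∈ maxIndepIn G A | a ∈ s ∧ Disjoint T s} := by
  rw [← card_filter_add_card_filter_not (s := {s ∈ maxIndepIn G A | Disjoint T s}) (a ∈ ·),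
    add_comm]
  simp only [filter_filter, disjoint_insert_left, and_comm]

lemma card_maxIndepIn_le_two_mul_of_isolated_edge {A : Finset V} {u v : V} (hv : v ∈ A)
    (hNu : nbrIn G A u = {v}) (hNv : nbrIn G A v = {u}) :
    #(maxIndepIn G A) ≤ 2 * #(maxIndepIn G (A \ {u, v})) := by
  have hmem : #{s ∈ maxIndepIn G A | u ∈ s} ≤ #(maxIndepIn G (A \ {u, v})) := by
    simpa [hNu] using card_filter_mem_le (G := G) A u
  have hnot : #{s ∈ maxIndepIn G A | u ∉ s} ≤ #(maxIndepIn G (A \ {u, v})) := by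
    calc #{s ∈ maxIndepIn G A | u ∉ s} ≤ #{s ∈ maxIndepIn G A | v ∈ s} := by
          refine card_le_card fun s hs => ?_
          simp only [mem_filter, mem_maxIndepIn] at hs ⊢
          exact ⟨hs.1, hs.1.mem_of_disjoint_nbrIn hv (by simpa [hNv] using hs.2)⟩
      _ ≤ _ := by simpa [hNv, pair_comm] using card_filter_mem_le (G := G) A v
  rw [← card_filter_add_card_filter_not (s := maxIndepIn G A) (u ∈ ·)]
  omega

lemma bddAbove_imIn_set (A : Finset V) :
    BddAbove {k | ∃ S ⊆ A, #S = 2 * k ∧ IsInducedMatching G S} :=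
  ⟨#A, by rintro k ⟨S, hSA, hS, -⟩; have := card_le_card hSA; omega⟩

lemma exists_isInducedMatching_card_eq_imIn (A : Finset V) :
    ∃ S ⊆ A, #S = 2 * imIn G A ∧ IsInducedMatching G S :=
  Nat.sSup_mem ⟨0, by refine ⟨∅, empty_subset A, rfl, ?_⟩; simp [IsInducedMatching]⟩
    (bddAbove_imIn_set A)

lemma le_imIn {A S : Finset V} {k : ℕ} (hSA : S ⊆ A) (hS : #S = 2 * k)
    (hM : IsInducedMatching G S) : k ≤ imIn G A :=
  le_csSup (bddAbove_imIn_set A) ⟨S, hSA, hS, hM⟩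

lemma imIn_mono {A B : Finset V} (h : A ⊆ B) : imIn G A ≤ imIn G B := by
  obtain ⟨S, hSA, hS, hM⟩ := exists_isInducedMatching_card_eq_imIn (G := G) A
  exact le_imIn (hSA.trans h) hS hM

lemma imIn_univ_le_im [Fintype V] (G : SimpleGraph V) : imIn G univ ≤ im G := by
  obtain ⟨S, -, hS, hM⟩ := exists_isInducedMatching_card_eq_imIn (G := G) univ
  exact le_csSup ⟨Fintype.card V, fun k ⟨T, hT, _⟩ => by have := T.card_le_univ; omega⟩
    ⟨S, hS, hM⟩

lemma IsInducedMatching.insert_insert {S : Finset V} {u v : V} (hM : IsInducedMatching G S)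
    (huv : G.Adj u v) (hu : ∀ x ∈ S, ¬ G.Adj u x) (hv : ∀ x ∈ S, ¬ G.Adj v x) :
    IsInducedMatching G (insert u (insert v S)) := by
  intro x hx
  simp only [mem_insert] at hx ⊢
  rcases hx with rfl | rfl | hx
  · exact ⟨v, by simp, huv, fun z hz hxz => by grind [SimpleGraph.irrefl]⟩
  · exact ⟨u, by simp, huv.symm, fun z hz hxz => by grind [SimpleGraph.irrefl]⟩
  · obtain ⟨y, hyS, hxy, hy⟩ := hM x hx
    exact ⟨y, by simp [hyS], hxy, fun z hz hxz => by grind [SimpleGraph.adj_symm]⟩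

lemma imIn_sdiff_pair_add_one_le {A : Finset V} {u v : V} (hu : u ∈ A) (hv : v ∈ A)
    (hNu : nbrIn G A u = {v}) (hNv : nbrIn G A v = {u}) :
    imIn G (A \ {u, v}) + 1 ≤ imIn G A := by
  have huv : G.Adj u v := (mem_nbrIn.1 (hNu ▸ mem_singleton_self v)).2
  obtain ⟨S, hSA, hS, hM⟩ := exists_isInducedMatching_card_eq_imIn (G := G) (A \ {u, v})
  have hSA' : S ⊆ A := hSA.trans sdiff_subset
  have huS : u ∉ S := fun h => (mem_sdiff.1 (hSA h)).2 (by simp)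
  have hvS : v ∉ S := fun h => (mem_sdiff.1 (hSA h)).2 (by simp)
  have hisol : ∀ {a b}, nbrIn G A a = {b} → b ∉ S → ∀ x ∈ S, ¬ G.Adj a x :=
    fun hN hb x hx hax => hb (mem_singleton.1 (hN ▸ mem_nbrIn.2 ⟨hSA' hx, hax⟩) ▸ hx)
  refine le_imIn (S := insert u (insert v S)) ?_ ?_
    (IsInducedMatching.insert_insert hM huv (hisol hNu hvS) (hisol hNv huS))
  · simp [insert_subset_iff, hu, hv, hSA']
  · rw [card_insert_of_notMem (by simp [huv.ne, huS]), card_insert_of_notMem hvS, hS]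
    ring

lemma two_rpow_neg_le : (2 : ℝ) ^ (-(49 / 100) : ℝ) ≤ 713 / 1000 := by
  refine le_of_pow_le_pow_left₀ (n := 100) (by norm_num) (by norm_num) ?_
  rw [← Real.rpow_natCast, ← Real.rpow_mul (by norm_num)]
  norm_num [Real.rpow_neg]

lemma branching_sum_le_one (d : ℕ) :
    (713 / 1000 : ℝ) ^ (d + 1) + ∑ i ∈ range d, (713 / 1000 : ℝ) ^ (max d 2 + 1 + i) ≤ 1 := by
  match d with
  | 0 | 1 | 2 | 3 => norm_num [sum_range_succ]
  | d + 4 =>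
    set q : ℝ := 713 / 1000
    have hgeom : ∑ i ∈ range (d + 4), q ^ i ≤ 1 / (1 - q) := by
      have := geom_sum_Ico_le_of_lt_one (m := 0) (n := d + 4) (x := q) (by norm_num) (by norm_num)
      rwa [← range_eq_Ico, pow_zero] at this
    have hpow : q ^ (d + 5) ≤ q ^ 5 := pow_le_pow_of_le_one (by norm_num) (by norm_num) (by omega)
    rw [max_eq_left (by omega)]
    simp only [pow_add _ (d + 4 + 1), ← mul_sum]
    calc q ^ (d + 4 + 1) + q ^ (d + 4 + 1) * ∑ i ∈ range (d + 4), q ^ i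
        ≤ q ^ 5 * (1 + 1 / (1 - q)) := by
          rw [mul_one_add]; gcongr
      _ ≤ 1 := by norm_num [q]

/-- Since `2 * (49 / 100) + 1 / 50 = 1`, deleting an isolated edge halves the potential, and
deleting `k` vertices multiplies it by at most `2 ^ (-(49 / 100) * k) ≤ 0.713 ^ k`. -/
def potential (G : SimpleGraph V) (A : Finset V) : ℝ :=
  2 ^ ((49 / 100 : ℝ) * #A + (1 / 50) * imIn G A)

lemma one_le_potential (A : Finset V) : 1 ≤ potential G A :=
  Real.one_le_rpow (by norm_num) (by positivity)

lemma potential_nonneg (A : Finset V) : 0 ≤ potential G A :=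
  zero_le_one.trans (one_le_potential A)

lemma potential_sdiff_le {A X : Finset V} {k : ℕ} (h : #(A \ X) + k ≤ #A) :
    potential G (A \ X) ≤ potential G A * (713 / 1000) ^ k := by
  have him : (imIn G (A \ X) : ℝ) ≤ imIn G A := by exact_mod_cast imIn_mono sdiff_subset
  have hcard : (#(A \ X) : ℝ) + k ≤ #A := by exact_mod_cast h
  calc potential G (A \ X)
      ≤ 2 ^ ((49 / 100 : ℝ) * #A + (1 / 50) * imIn G A + (-(49 / 100)) * k) :=
        Real.rpow_le_rpow_of_exponent_le (by norm_num) (by linarith)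
    _ = potential G A * ((2 : ℝ) ^ (-(49 / 100) : ℝ)) ^ k := by
        rw [Real.rpow_add (by norm_num), ← Real.rpow_natCast, ← Real.rpow_mul (by norm_num)]
        rfl
    _ ≤ potential G A * (713 / 1000) ^ k := by
        gcongr
        · exact potential_nonneg A
        · exact two_rpow_neg_le

lemma two_mul_potential_sdiff_le {A X : Finset V} (hcard : #(A \ X) + 2 ≤ #A)
    (him : imIn G (A \ X) + 1 ≤ imIn G A) : 2 * potential G (A \ X) ≤ potential G A := by
  have hcard' : (#(A \ X) : ℝ) + 2 ≤ #A := by exact_mod_cast hcard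
  have him' : (imIn G (A \ X) : ℝ) + 1 ≤ imIn G A := by exact_mod_cast him
  calc 2 * potential G (A \ X)
      = 2 ^ ((49 / 100 : ℝ) * #(A \ X) + (1 / 50) * imIn G (A \ X) + 1) := by
        rw [Real.rpow_add (by norm_num), Real.rpow_one, mul_comm]; rfl
    _ ≤ potential G A := Real.rpow_le_rpow_of_exponent_le (by norm_num) (by linarith)

lemma card_filter_mem_disjoint_le_potential {A F : Finset V} {u : V}
    (ih : ∀ B ⊂ A, (#(maxIndepIn G B) : ℝ) ≤ potential G B) (hu : u ∈ A) (hFA : F ⊆ A)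
    (hF : ∀ f ∈ F, f ≠ u ∧ ¬ G.Adj u f) :
    (#{s ∈ maxIndepIn G A | u ∈ s ∧ Disjoint F s} : ℝ) ≤
      potential G A * (713 / 1000) ^ (#(nbrIn G A u) + 1 + #F) := by
  set X := insert u (nbrIn G A u) ∪ F
  have hXA : X ⊆ A := union_subset (insert_subset hu (nbrIn_subset A u)) hFA
  have hX : #X = #(nbrIn G A u) + 1 + #F := by
    rw [card_union_of_disjoint, card_insert_of_notMem (fun h => G.irrefl (mem_nbrIn.1 h).2)]
    refine disjoint_right.2 fun f hf h => ?_
    rcases mem_insert.1 h with rfl | h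
    · exact (hF f hf).1 rfl
    · exact (hF f hf).2 (mem_nbrIn.1 h).2
  have hssub : A \ X ⊂ A := sdiff_ssubset hXA ⟨u, mem_union_left _ (mem_insert_self _ _)⟩
  calc (#{s ∈ maxIndepIn G A | u ∈ s ∧ Disjoint F s} : ℝ)
      ≤ #(maxIndepIn G (A \ X)) := by exact_mod_cast card_filter_mem_disjoint_le hF
    _ ≤ potential G (A \ X) := ih _ hssub
    _ ≤ _ := hX ▸ potential_sdiff_le (card_sdiff_add_card_eq_card hXA).le

lemma card_maxIndepIn_le_card_filter_disjoint_add {A T : Finset V} {e : ℕ}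
    (ih : ∀ B ⊂ A, (#(maxIndepIn G B) : ℝ) ≤ potential G B) (hTA : T ⊆ A)
    (hT : IsIndepSet G T) (he : ∀ t ∈ T, e ≤ #(nbrIn G A t)) :
    (#(maxIndepIn G A) : ℝ) ≤ #{s ∈ maxIndepIn G A | Disjoint T s} +
      potential G A * ∑ i ∈ range #T, (713 / 1000 : ℝ) ^ (e + 1 + i) := by
  induction T using Finset.induction_on with
  | empty => simp
  | insert a T haT IH =>
    rw [insert_subset_iff] at hTA
    have hbranch := card_filter_mem_disjoint_le_potential ih hTA.1 hTA.2 fun f hf =>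
      ⟨ne_of_mem_of_not_mem hf haT, hT (mem_insert_self a T) (mem_insert_of_mem hf)⟩
    have hq : potential G A * (713 / 1000 : ℝ) ^ (#(nbrIn G A a) + 1 + #T) ≤
        potential G A * (713 / 1000) ^ (e + 1 + #T) := by
      have := he a (mem_insert_self a T)
      exact mul_le_mul_of_nonneg_left
        (pow_le_pow_of_le_one (by norm_num) (by norm_num) (by omega)) (potential_nonneg A)
    have IH := IH hTA.2 (fun x hx y hy => hT (mem_insert_of_mem hx) (mem_insert_of_mem hy))
      (fun t ht => he t (mem_insert_of_mem ht))
    rw [card_filter_disjoint_eq_add A T a, Nat.cast_add] at IH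
    rw [card_insert_of_notMem haT, sum_range_succ, mul_add]
    linarith

lemma card_maxIndepIn_le_potential_of_isolated_edge {A : Finset V} {u v : V}
    (ih : ∀ B ⊂ A, (#(maxIndepIn G B) : ℝ) ≤ potential G B) (hv : v ∈ A)
    (hNv : nbrIn G A v = {u}) (hNu : nbrIn G A u = {v}) :
    (#(maxIndepIn G A) : ℝ) ≤ potential G A := by
  have hvu : G.Adj v u := (mem_nbrIn.1 (hNv ▸ mem_singleton_self u)).2
  have hu : u ∈ A := (mem_nbrIn.1 (hNv ▸ mem_singleton_self u)).1
  have huvA : {u, v} ⊆ A := insert_subset hu (singleton_subset_iff.2 hv)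
  have hcard : #(A \ {u, v}) + 2 ≤ #A := by
    rw [← card_pair hvu.ne.symm, card_sdiff_add_card_eq_card huvA]
  calc (#(maxIndepIn G A) : ℝ)
      ≤ 2 * #(maxIndepIn G (A \ {u, v})) := by
        exact_mod_cast card_maxIndepIn_le_two_mul_of_isolated_edge hv hNu hNv
    _ ≤ 2 * potential G (A \ {u, v}) := by
        gcongr
        exact ih _ (sdiff_ssubset huvA ⟨u, mem_insert_self u {v}⟩)
    _ ≤ potential G A :=
        two_mul_potential_sdiff_le hcard (imIn_sdiff_pair_add_one_le hu hv hNu hNv)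

lemma card_maxIndepIn_le_potential_of_not_isolated_edge (hG : G.CliqueFree 3) {A : Finset V}
    {v : V} (ih : ∀ B ⊂ A, (#(maxIndepIn G B) : ℝ) ≤ potential G B) (hv : v ∈ A)
    (hmin : ∀ x ∈ A, #(nbrIn G A v) ≤ #(nbrIn G A x))
    (hedge : ¬ ∃ u, nbrIn G A v = {u} ∧ nbrIn G A u = {v}) :
    (#(maxIndepIn G A) : ℝ) ≤ potential G A := by
  set d := #(nbrIn G A v)
  have hdeg : ∀ t ∈ nbrIn G A v, max d 2 ≤ #(nbrIn G A t) := by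
    intro t ht
    have hvt : v ∈ nbrIn G A t := mem_nbrIn.2 ⟨hv, (mem_nbrIn.1 ht).2.symm⟩
    have eq_singleton {s : Finset V} {a : V} (ha : a ∈ s) (hs : #s ≤ 1) : s = {a} :=
      eq_singleton_iff_unique_mem.2 ⟨ha, fun x hx => card_le_one.1 hs x hx a ha⟩
    have hdt := hmin t (mem_nbrIn.1 ht).1
    refine max_le hdt (by_contra fun hlt => hedge ⟨t, ?_, ?_⟩)
    · exact eq_singleton ht (by omega)
    · exact eq_singleton hvt (by omega)
  have hseq := card_maxIndepIn_le_card_filter_disjoint_add ih (nbrIn_subset A v)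
    (isIndepSet_nbrIn hG A v) hdeg
  have hself : (#{s ∈ maxIndepIn G A | Disjoint (nbrIn G A v) s} : ℝ) ≤
      potential G A * (713 / 1000) ^ (d + 1) := by
    calc (#{s ∈ maxIndepIn G A | Disjoint (nbrIn G A v) s} : ℝ)
        ≤ #{s ∈ maxIndepIn G A | v ∈ s ∧ Disjoint ∅ s} := by
          refine Nat.cast_le.2 (card_le_card fun s hs => ?_)
          simp only [mem_filter, mem_maxIndepIn, disjoint_empty_left, and_true] at hs ⊢
          exact ⟨hs.1, hs.1.mem_of_disjoint_nbrIn hv hs.2⟩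
      _ ≤ potential G A * (713 / 1000) ^ (d + 1) := by
          simpa using card_filter_mem_disjoint_le_potential ih hv (empty_subset A) (by simp)
  calc (#(maxIndepIn G A) : ℝ)
      ≤ potential G A * ((713 / 1000) ^ (d + 1) +
          ∑ i ∈ range d, (713 / 1000 : ℝ) ^ (max d 2 + 1 + i)) := by
        rw [mul_add]; linarith
    _ ≤ potential G A := mul_le_of_le_one_right (potential_nonneg A) (branching_sum_le_one d)

theorem card_maxIndepIn_le_potential (hG : G.CliqueFree 3) (A : Finset V) :
    (#(maxIndepIn G A) : ℝ) ≤ potential G A := by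
  induction A using Finset.strongInduction with
  | H A ih =>
    obtain rfl | hA := A.eq_empty_or_nonempty
    · calc (#(maxIndepIn G ∅) : ℝ) ≤ #(powerset (∅ : Finset V)) := by
            exact_mod_cast card_le_card (filter_subset _ _)
        _ ≤ potential G ∅ := by simpa using one_le_potential (G := G) ∅
    obtain ⟨v, hv, hmin⟩ := exists_min_image A (fun x => #(nbrIn G A x)) hA
    by_cases hedge : ∃ u, nbrIn G A v = {u} ∧ nbrIn G A u = {v}
    · obtain ⟨u, hNv, hNu⟩ := hedge
      exact card_maxIndepIn_le_potential_of_isolated_edge ih hv hNv hNu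
    · exact card_maxIndepIn_le_potential_of_not_isolated_edge hG ih hv hmin hedge

theorem logb_mis_le [Fintype V] (hG : G.CliqueFree 3) :
    Real.logb 2 (mis G) ≤ (49 / 100) * Fintype.card V + (1 / 50) * im G := by
  have hmis : (mis G : ℝ) ≤ potential G univ :=
    (Nat.cast_le.2 (mis_le_card_maxIndepIn_univ G)).trans (card_maxIndepIn_le_potential hG univ)
  have him : (imIn G univ : ℝ) ≤ im G := by exact_mod_cast imIn_univ_le_im G
  rcases (Nat.zero_le (mis G)).eq_or_lt with h0 | hpos
  · rw [← h0, Nat.cast_zero, Real.logb_zero]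
    positivity
  rw [Real.logb_le_iff_le_rpow one_lt_two (by exact_mod_cast hpos)]
  refine hmis.trans (Real.rpow_le_rpow_of_exponent_le one_le_two ?_)
  rw [card_univ]
  linarith

end

end MaxIndepCount

theorem stability_im :
    ∃ c : ℝ, 0 < c ∧ ∀ ε : ℝ, 0 < ε → ∃ δ : ℝ, 0 < δ ∧ c * ε ≤ δ ∧
      ∀ (V : Type) [Fintype V] (G : SimpleGraph V), G.CliqueFree 3 →
        (im G : ℝ) < (1 - ε) * (Fintype.card V : ℝ) / 2 →
        Real.logb 2 (mis G) < (1 / 2 - δ) * (Fintype.card V : ℝ) := by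
  refine ⟨1 / 100, by norm_num, fun ε hε => ⟨ε / 100, by positivity, by linarith, ?_⟩⟩
  intro V _ G hG him
  linarith [MaxIndepCount.logb_mis_le hG]
end

section
/- For every bipartite graph G with parts X and Y, the number of maximal independent sets of G is at most the number of irredundant subsets of X; that is, mis(G) ≤ irr(G). -/
/-!
A maximal independent set `S` is the complement of its own neighbourhood. In a bipartite
graph this makes `S` determined by `N(S ∩ X)`: its `Y`-part is `Y \ N(S ∩ X)`, and then its
`X`-part is `X \ N(S ∩ Y)`.
A minimal subset `J ⊆ S ∩ X` with `N(J) = N(S ∩ X)` is irredundant, so `S ↦ J` is an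
injection from maximal independent sets into irredundant subsets of `X`.
-/

section

open Set

variable {V : Type*} (G : SimpleGraph V)

lemma nbhd_mono {A B : Set V} (h : A ⊆ B) : nbhd G A ⊆ nbhd G B :=
  fun _ ⟨x, hx, hadj⟩ => ⟨x, h hx, hadj⟩

lemma nbhd_diff_singleton_eq {J : Set V} {x : V} (hx : G.neighborSet x ⊆ nbhd G (J \ {x})) :
    nbhd G (J \ {x}) = nbhd G J := by
  refine (nbhd_mono G sdiff_subset).antisymm fun z ⟨x', hx', hadj⟩ => ?_
  by_cases hxx' : x' = x
  · exact hx (hxx' ▸ hadj)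
  · exact ⟨x', ⟨hx', hxx'⟩, hadj⟩

lemma exists_irredundant_subset_nbhd_eq {A : Set V} (hA : A.Finite) :
    ∃ J ⊆ A, Irredundant G J ∧ nbhd G J = nbhd G A := by
  obtain ⟨J, -, hJ⟩ := (hA.finite_subsets.inter_of_left {J | nbhd G J = nbhd G A})
    |>.exists_le_minimal (a := A) ⟨Subset.rfl, rfl⟩
  refine ⟨J, hJ.prop.1, fun x hx hcov => ?_, hJ.prop.2⟩
  exact hJ.not_prop_of_lt (sdiff_singleton_ssubset.2 hx)
    ⟨sdiff_subset.trans hJ.prop.1, (nbhd_diff_singleton_eq G hcov).trans hJ.prop.2⟩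

lemma nbhd_inter_iff_of_neighborSet_subset {S T : Set V} {v : V} (hv : G.neighborSet v ⊆ T) :
    v ∈ nbhd G (S ∩ T) ↔ v ∈ nbhd G S :=
  ⟨fun h => nbhd_mono G inter_subset_left h,
    fun ⟨x, hx, hadj⟩ => ⟨x, ⟨hx, hv hadj.symm⟩, hadj⟩⟩

lemma IsMaxIndepSet.nbhd_eq_compl {S : Set V} (hS : IsMaxIndepSet G S) : nbhd G S = Sᶜ := by
  ext v
  refine ⟨fun ⟨x, hx, hadj⟩ hv => hS.1 hx hv hadj, fun hv => by_contra fun hvN => hv ?_⟩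
  have hind : IsIndepSet G (insert v S) := by
    rintro a (rfl | ha) b (rfl | hb) hadj
    · exact G.loopless.irrefl _ hadj
    · exact hvN ⟨b, hb, hadj.symm⟩
    · exact hvN ⟨a, ha, hadj⟩
    · exact hS.1 ha hb hadj
  exact hS.2 _ hind (subset_insert v S) ▸ mem_insert v S

lemma IsMaxIndepSet.inter_eq_diff_nbhd {S X Y : Set V} (hS : IsMaxIndepSet G S)
    (hY : ∀ y ∈ Y, G.neighborSet y ⊆ X) : S ∩ Y = Y \ nbhd G (S ∩ X) := by
  ext y
  by_cases hy : y ∈ Y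
  · rw [mem_sdiff, nbhd_inter_iff_of_neighborSet_subset G (hY y hy), hS.nbhd_eq_compl,
      mem_compl_iff, not_not, mem_inter_iff, and_comm]
  · simp [hy]

lemma IsMaxIndepSet.eq_of_nbhd_inter_eq {S T X Y : Set V} (hS : IsMaxIndepSet G S)
    (hT : IsMaxIndepSet G T) (hcover : ∀ v, v ∈ X ∨ v ∈ Y) (hX : ∀ x ∈ X, G.neighborSet x ⊆ Y)
    (hY : ∀ y ∈ Y, G.neighborSet y ⊆ X) (h : nbhd G (S ∩ X) = nbhd G (T ∩ X)) : S = T := by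
  have hSY : S ∩ Y = T ∩ Y := by
    rw [hS.inter_eq_diff_nbhd G hY, hT.inter_eq_diff_nbhd G hY, h]
  have hSX : S ∩ X = T ∩ X := by
    rw [hS.inter_eq_diff_nbhd G hX, hT.inter_eq_diff_nbhd G hX, hSY]
  have hXY : X ∪ Y = univ := eq_univ_of_forall hcover
  rw [← inter_univ S, ← inter_univ T, ← hXY, inter_union_distrib_left,
    inter_union_distrib_left, hSX, hSY]

end

theorem mis_le_irr {V : Type*} [Fintype V] (G : SimpleGraph V) (X Y : Finset V)
    (hdisj : Disjoint X Y) (hcover : ∀ v : V, v ∈ X ∨ v ∈ Y)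
    (hbip : ∀ a b : V, G.Adj a b → (a ∈ X ∧ b ∈ Y) ∨ (a ∈ Y ∧ b ∈ X)) :
    mis G ≤ irr G ↑X := by
  have hX : ∀ x ∈ (X : Set V), G.neighborSet x ⊆ Y := fun x hx y hxy =>
    ((hbip x y hxy).resolve_right fun h => Finset.disjoint_left.mp hdisj hx h.1).2
  have hY : ∀ y ∈ (Y : Set V), G.neighborSet y ⊆ X := fun y hy x hyx =>
    ((hbip y x hyx).resolve_left fun h => Finset.disjoint_left.mp hdisj h.1 hy).2
  choose J hJS hJirr hJnbhd using fun S : {S // IsMaxIndepSet G S} =>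
    exists_irredundant_subset_nbhd_eq G (X.finite_toSet.inter_of_right S.1)
  refine Nat.card_le_card_of_injective
    (fun S => ⟨J S, (hJS S).trans Set.inter_subset_right, hJirr S⟩)
    fun S T hST => Subtype.ext <| S.2.eq_of_nbhd_inter_eq G T.2 hcover hX hY ?_
  rw [← hJnbhd S, ← hJnbhd T]
  exact congrArg (nbhd G ∘ Subtype.val) hST
end

section
/- Let γ be the unique real solution of 1 + γ = γ³ (γ ≈ 1.325). If R is a triangle-free graph on r vertices with maximum degree at most 2 in which no connected component is a single edge (so R is a vertex-disjoint union of isolated vertices, cycles with at least 4 vertices, and paths with at least 3 vertices), then mis(R) ≤ (3γ)^{r/4}. -/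
/-!
Induct on the number of vertices, bounding `mis G` by `θ ^ |V| * ρ ^ k` with `θ = (3γ)^(1/4)`,
`ρ = √2 / θ` and `k` the number of vertices on isolated edges: an isolated edge has `mis = 2 > θ²`,
and deleting vertices can create such edges. Every maximal independent set contains a given
vertex or one of its neighbours, and fixing which one determines the set on a small set `D`, so
`mis G ≤ ∑ mis (G - D)`. An isolated edge gives `2 * mis (G - edge)`, paid for by `θ² ρ² = 2`; a
leaf gives branches deleting 2 and 3 vertices; if all degrees are two, triangle-freeness gives
branches deleting 3, 3 and 4 vertices. Since `θ⁻² + θ⁻³ < 1` and `2θ⁻³ + θ⁻⁴ < 1` with room to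
spare, the boundedly many isolated-edge vertices a branch creates are absorbed.
-/

section

variable {V : Type*} {G : SimpleGraph V}

lemma mis_eq_ncard : mis G = {S | IsMaxIndepSet G S}.ncard :=
  Nat.card_coe_set_eq _

lemma IsMaxIndepSet.exists_adj_of_notMem {S : Set V} (hS : IsMaxIndepSet G S) {x : V}
    (hx : x ∉ S) : ∃ y ∈ S, G.Adj x y := by
  by_contra! h
  refine hx (hS.2 (insert x S) ?_ (Set.subset_insert x S) ▸ Set.mem_insert x S)
  rintro a (rfl | ha) b (rfl | hb) hab
  · exact G.irrefl hab
  · exact h b hb hab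
  · exact h a ha hab.symm
  · exact hS.1 ha hb hab

lemma IsMaxIndepSet.induce_compl {S D : Set V} (hS : IsMaxIndepSet G S)
    (hD : ∀ x ∈ S ∩ D, G.neighborSet x ⊆ D) :
    IsMaxIndepSet (G.induce Dᶜ) (Subtype.val ⁻¹' S) := by
  refine ⟨fun x hx y hy => hS.1 hx hy, fun T hT hST => hST.antisymm fun x hxT => ?_⟩
  by_contra hxS
  obtain ⟨y, hyS, hxy⟩ := hS.exists_adj_of_notMem hxS
  by_cases hyD : y ∈ D
  · exact x.2 (hD y ⟨hyS, hyD⟩ hxy.symm)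
  · exact hT hxT (hST (show (⟨y, hyD⟩ : ↥Dᶜ) ∈ Subtype.val ⁻¹' S from hyS)) hxy

/-- A maximal independent set `S` is recovered from an index `i` it is covered by and from its
trace on the complement of `D i`, which is maximal independent in `G - D i`. -/
lemma mis_le_sum_of_cover [Finite V] {ι : Type*} [Fintype ι] (a : ι → V) (D : ι → Set V)
    (hD : ∀ i, G.neighborSet (a i) ⊆ D i)
    (hcover : ∀ S, IsMaxIndepSet G S → ∃ i, a i ∈ S ∧ S ∩ D i ⊆ {a i}) :
    mis G ≤ ∑ i, mis (G.induce (D i)ᶜ) := by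
  let B i := {S | IsMaxIndepSet G S ∧ a i ∈ S ∧ S ∩ D i ⊆ {a i}}
  have hB : ∀ i, (B i).ncard ≤ mis (G.induce (D i)ᶜ) := by
    intro i
    have mem_iff : ∀ S ∈ B i, ∀ x ∈ D i, x ∈ S ↔ x = a i := fun S hS x hx =>
      ⟨fun hxS => hS.2.2 ⟨hxS, hx⟩, fun h => h ▸ hS.2.1⟩
    rw [mis_eq_ncard]
    refine Set.ncard_le_ncard_of_injOn (fun S => Subtype.val ⁻¹' S) (fun S hS => ?_)
      (fun S₁ hS₁ S₂ hS₂ h => ?_)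
    · exact hS.1.induce_compl fun x hx => hS.2.2 hx ▸ hD i
    · ext x
      by_cases hx : x ∈ D i
      · rw [mem_iff S₁ hS₁ x hx, mem_iff S₂ hS₂ x hx]
      · exact Set.ext_iff.1 h ⟨x, hx⟩
  calc mis G = {S | IsMaxIndepSet G S}.ncard := mis_eq_ncard
    _ ≤ (⋃ i, B i).ncard := Set.ncard_le_ncard (fun S hS => Set.mem_iUnion.2 <|
        (hcover S hS).imp fun _ hi => ⟨hS, hi⟩)
    _ ≤ ∑ i, (B i).ncard := Set.ncard_iUnion_le_of_fintype B
    _ ≤ ∑ i, mis (G.induce (D i)ᶜ) := Finset.sum_le_sum fun i _ => hB i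

lemma mis_le_one_of_isEmpty [IsEmpty V] : mis G ≤ 1 :=
  Finite.card_le_one_iff_subsingleton.2 inferInstance

lemma ncard_neighborSet_induce_le [Finite V] (s : Set V) (x : s) :
    ((G.induce s).neighborSet x).ncard ≤ (G.neighborSet x).ncard :=
  Set.ncard_le_ncard_of_injOn Subtype.val (fun _ h => h) Subtype.val_injective.injOn

lemma neighborSet_eq_pair [Finite V] {x : V} (hdeg : (G.neighborSet x).ncard ≤ 2) {a b : V}
    (ha : G.Adj x a) (hb : G.Adj x b) (hab : a ≠ b) : G.neighborSet x = {a, b} :=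
  (Set.eq_of_subset_of_ncard_le (Set.pair_subset ha hb)
    (hdeg.trans (Set.ncard_pair hab).ge)).symm

lemma exists_neighborSet_eq_pair {x a : V} (hx : (G.neighborSet x).ncard = 2) (ha : G.Adj x a) :
    ∃ b, b ≠ a ∧ G.neighborSet x = {a, b} := by
  obtain ⟨p, q, hpq, hN⟩ := Set.ncard_eq_two.1 hx
  have : a ∈ ({p, q} : Set V) := hN ▸ ha
  rcases this with rfl | rfl
  · exact ⟨q, hpq.symm, hN⟩
  · exact ⟨p, hpq, hN.trans (Set.pair_comm _ _)⟩

lemma ncard_nbhd_le [Finite V] (hdeg : ∀ v, (G.neighborSet v).ncard ≤ 2) (S : Set V) :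
    (nbhd G S).ncard ≤ 2 * S.ncard := by
  have hS : nbhd G S = ⋃ x ∈ S.toFinite.toFinset, G.neighborSet x := by
    ext y; simp [nbhd]
  calc (nbhd G S).ncard ≤ ∑ x ∈ S.toFinite.toFinset, (G.neighborSet x).ncard :=
        hS ▸ Finset.set_ncard_biUnion_le _ _
    _ ≤ ∑ _x ∈ S.toFinite.toFinset, 2 := Finset.sum_le_sum fun x _ => hdeg x
    _ = 2 * S.ncard := by rw [Finset.sum_const, smul_eq_mul, mul_comm, Set.ncard_eq_toFinset_card]

lemma nbhd_subset_of_forall_neighborSet_subset {D : Set V}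
    (hD : ∀ x ∈ D, G.neighborSet x ⊆ D) : nbhd G D ⊆ D := by
  rintro y ⟨x, hx, hxy⟩
  exact hD x hx hxy

def IsIsolatedEdge (G : SimpleGraph V) (x y : V) : Prop :=
  G.neighborSet x = {y} ∧ G.neighborSet y = {x}

def isolatedEdgeVerts (G : SimpleGraph V) : Set V :=
  {x | ∃ y, IsIsolatedEdge G x y}

lemma IsIsolatedEdge.adj {x y : V} (h : IsIsolatedEdge G x y) : G.Adj x y := by
  simp [← G.mem_neighborSet, h.1]

lemma IsIsolatedEdge.of_induce_compl {D : Set V} {x y : ↥Dᶜ}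
    (h : IsIsolatedEdge (G.induce Dᶜ) x y) (hx : ∀ z ∈ D, ¬ G.Adj z x)
    (hy : ∀ z ∈ D, ¬ G.Adj z y) : IsIsolatedEdge G x y := by
  have key : ∀ {p q : ↥Dᶜ}, (G.induce Dᶜ).neighborSet p = {q} → (∀ z ∈ D, ¬ G.Adj z p) →
      G.neighborSet p = {(q : V)} := by
    intro p q hp hpD
    have hpq : q ∈ (G.induce Dᶜ).neighborSet p := by rw [hp]; rfl
    refine Set.eq_singleton_iff_unique_mem.2 ⟨hpq, fun z hz => ?_⟩
    have hzD : z ∉ D := fun h => hpD z h hz.symm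
    exact congrArg Subtype.val (hp.subset (show (⟨z, hzD⟩ : ↥Dᶜ) ∈ _ from hz))
  exact ⟨key h.1 hx, key h.2 hy⟩

lemma image_isolatedEdgeVerts_induce_compl_subset (D : Set V) :
    Subtype.val '' isolatedEdgeVerts (G.induce Dᶜ) ⊆
      isolatedEdgeVerts G ∪ nbhd G D ∪ nbhd G (nbhd G D) := by
  rintro _ ⟨x, ⟨y, hxy⟩, rfl⟩
  by_cases hx : ∃ z ∈ D, G.Adj z x
  · exact Or.inl (Or.inr hx)
  by_cases hy : ∃ z ∈ D, G.Adj z y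
  · exact Or.inr ⟨y, hy, hxy.adj.symm⟩
  push Not at hx hy
  exact Or.inl (Or.inl ⟨y, hxy.of_induce_compl hx hy⟩)

lemma ncard_isolatedEdgeVerts_induce_compl_le [Finite V]
    (hdeg : ∀ v, (G.neighborSet v).ncard ≤ 2) (D : Set V) :
    (isolatedEdgeVerts (G.induce Dᶜ)).ncard ≤ (isolatedEdgeVerts G).ncard + 6 * D.ncard := by
  have := ncard_nbhd_le hdeg D
  have := ncard_nbhd_le hdeg (nbhd G D)
  calc (isolatedEdgeVerts (G.induce Dᶜ)).ncard
      = (Subtype.val '' isolatedEdgeVerts (G.induce Dᶜ)).ncard :=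
        (Set.ncard_image_of_injective _ Subtype.val_injective).symm
    _ ≤ (isolatedEdgeVerts G ∪ nbhd G D ∪ nbhd G (nbhd G D)).ncard :=
        Set.ncard_le_ncard (image_isolatedEdgeVerts_induce_compl_subset D)
    _ ≤ (isolatedEdgeVerts G).ncard + (nbhd G D).ncard + (nbhd G (nbhd G D)).ncard :=
        (Set.ncard_union_le _ _).trans (Nat.add_le_add_right (Set.ncard_union_le _ _) _)
    _ ≤ _ := by omega

lemma ncard_isolatedEdgeVerts_induce_compl_le_of_closed [Finite V] {D : Set V}
    (hD : ∀ x ∈ D, G.neighborSet x ⊆ D) :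
    (isolatedEdgeVerts (G.induce Dᶜ)).ncard ≤ (isolatedEdgeVerts G \ D).ncard := by
  have hN := nbhd_subset_of_forall_neighborSet_subset hD
  rw [← Set.ncard_image_of_injective _ Subtype.val_injective]
  refine Set.ncard_le_ncard fun x hx => ?_
  have hxD : x ∉ D := by obtain ⟨x, -, rfl⟩ := hx; exact x.2
  rcases image_isolatedEdgeVerts_induce_compl_subset D hx with (h | h) | h
  · exact ⟨h, hxD⟩
  · exact absurd (hN h) hxD
  · obtain ⟨y, hy, hyx⟩ := h
    exact absurd (hD y (hN hy) hyx) hxD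

lemma image_isolatedEdgeVerts_induce_compl_subset_nbhd [Finite V]
    (hmin : ∀ v, 2 ≤ (G.neighborSet v).ncard) (D : Set V) :
    Subtype.val '' isolatedEdgeVerts (G.induce Dᶜ) ⊆ nbhd G D := by
  rintro _ ⟨x, ⟨y, hxy, -⟩, rfl⟩
  obtain ⟨a, b, ha, hb, hab⟩ := (Set.one_lt_ncard_iff (Set.toFinite _)).1 (hmin x)
  by_contra! hx
  have mem : ∀ c, G.Adj x c → c ∉ D := fun c hc hcD => hx ⟨c, hcD, hc.symm⟩
  have ha' := hxy.subset (show (⟨a, mem a ha⟩ : ↥Dᶜ) ∈ _ from ha)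
  have hb' := hxy.subset (show (⟨b, mem b hb⟩ : ↥Dᶜ) ∈ _ from hb)
  exact hab (congrArg Subtype.val (ha'.trans hb'.symm))

lemma isolatedEdgeVerts_eq_empty
    (h : ∀ x y, G.Adj x y → ∃ z, (G.Adj x z ∧ z ≠ y) ∨ (G.Adj y z ∧ z ≠ x)) :
    isolatedEdgeVerts G = ∅ := by
  refine Set.eq_empty_of_forall_notMem fun x ⟨y, hxy⟩ => ?_
  obtain ⟨z, ⟨hxz, hzy⟩ | ⟨hyz, hzx⟩⟩ := h x y hxy.adj
  · exact hzy (hxy.1 ▸ hxz : z ∈ ({y} : Set V))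
  · exact hzx (hxy.2 ▸ hyz : z ∈ ({x} : Set V))

lemma ncard_isolatedEdgeVerts_induce_compl_le_of_forall_ncard_eq_two [Finite V]
    (hdeg : ∀ v, (G.neighborSet v).ncard = 2) (D : Set V) :
    (isolatedEdgeVerts (G.induce Dᶜ)).ncard ≤ 2 * D.ncard :=
  calc (isolatedEdgeVerts (G.induce Dᶜ)).ncard
      = (Subtype.val '' isolatedEdgeVerts (G.induce Dᶜ)).ncard :=
        (Set.ncard_image_of_injective _ Subtype.val_injective).symm
    _ ≤ (nbhd G D).ncard := Set.ncard_le_ncard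
        (image_isolatedEdgeVerts_induce_compl_subset_nbhd (fun x => (hdeg x).ge) D)
    _ ≤ 2 * D.ncard := ncard_nbhd_le (fun x => (hdeg x).le) D

section Branching

variable [Finite V]

lemma mis_le_mis_induce_compl_singleton {v : V} (hv : G.neighborSet v = ∅) :
    mis G ≤ mis (G.induce {v}ᶜ) := by
  refine (mis_le_sum_of_cover (fun _ : Unit => v) (fun _ => {v}) (fun _ => by simp [hv])
    fun S hS => ⟨(), ?_, Set.inter_subset_right⟩).trans_eq (Fintype.sum_unique _)
  by_contra hvS
  obtain ⟨y, -, hvy⟩ := hS.exists_adj_of_notMem hvS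
  exact (hv ▸ hvy : y ∈ (∅ : Set V))

lemma mis_le_two_mul_of_isIsolatedEdge {x y : V} (hxy : IsIsolatedEdge G x y) :
    mis G ≤ 2 * mis (G.induce {x, y}ᶜ) := by
  refine (mis_le_sum_of_cover ![x, y] (fun _ => {x, y}) (fun i => ?_) fun S hS => ?_).trans_eq
    (by simp [two_mul])
  · fin_cases i <;> simp [hxy.1, hxy.2]
  by_cases hx : x ∈ S
  · refine ⟨0, hx, ?_⟩
    rintro z ⟨hz, rfl | rfl⟩
    exacts [rfl, absurd hxy.adj (hS.1 hx hz)]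
  · obtain ⟨z, hz, hxz⟩ := hS.exists_adj_of_notMem hx
    obtain rfl : z = y := (hxy.1 ▸ hxz : z ∈ ({y} : Set V))
    refine ⟨1, hz, ?_⟩
    rintro z' ⟨hz', rfl | rfl⟩
    exacts [absurd hz' hx, rfl]

lemma mis_le_add_of_neighborSet_eq_singleton {v u w : V} (hv : G.neighborSet v = {u})
    (hu : G.neighborSet u = {v, w}) :
    mis G ≤ mis (G.induce {v, u}ᶜ) + mis (G.induce {v, u, w}ᶜ) := by
  have hvu : G.Adj v u := by simp [← G.mem_neighborSet, hv]
  have huw : G.Adj u w := by simp [← G.mem_neighborSet, hu]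
  refine (mis_le_sum_of_cover ![v, u] ![{v, u}, {v, u, w}] (fun i => ?_) fun S hS => ?_).trans_eq
    (Fin.sum_univ_two _)
  · fin_cases i <;> simp [hv, hu, Set.pair_subset_iff]
  by_cases hvS : v ∈ S
  · refine ⟨0, hvS, ?_⟩
    rintro z ⟨hz, rfl | rfl⟩
    exacts [rfl, absurd hvu (hS.1 hvS hz)]
  · obtain ⟨z, hz, hvz⟩ := hS.exists_adj_of_notMem hvS
    obtain rfl : z = u := (hv ▸ hvz : z ∈ ({u} : Set V))
    refine ⟨1, hz, ?_⟩
    rintro z' ⟨hz', rfl | rfl | rfl⟩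
    exacts [absurd hz' hvS, rfl, absurd huw (hS.1 hz hz')]

/-- The third branch also records that `u ∉ S`, which is what makes it delete four vertices. -/
lemma mis_le_add_add_of_neighborSet_eq_pair {v u w u' w' : V} (hv : G.neighborSet v = {u, w})
    (hu : G.neighborSet u = {v, u'}) (hw : G.neighborSet w = {v, w'}) :
    mis G ≤ mis (G.induce {v, u, w}ᶜ) + mis (G.induce {v, u, u'}ᶜ) +
      mis (G.induce {v, u, w, w'}ᶜ) := by
  have hvu : G.Adj v u := by simp [← G.mem_neighborSet, hv]
  have hvw : G.Adj v w := by simp [← G.mem_neighborSet, hv]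
  have huu' : G.Adj u u' := by simp [← G.mem_neighborSet, hu]
  have hww' : G.Adj w w' := by simp [← G.mem_neighborSet, hw]
  refine (mis_le_sum_of_cover ![v, u, w] ![{v, u, w}, {v, u, u'}, {v, u, w, w'}] (fun i => ?_)
    fun S hS => ?_).trans_eq (by simp [Fin.sum_univ_three])
  · fin_cases i <;> simp [hv, hu, hw, Set.pair_subset_iff]
  by_cases hvS : v ∈ S
  · refine ⟨0, hvS, ?_⟩
    rintro z ⟨hz, rfl | rfl | rfl⟩
    exacts [rfl, absurd hvu (hS.1 hvS hz), absurd hvw (hS.1 hvS hz)]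
  by_cases huS : u ∈ S
  · refine ⟨1, huS, ?_⟩
    rintro z ⟨hz, rfl | rfl | rfl⟩
    exacts [absurd hz hvS, rfl, absurd huu' (hS.1 huS hz)]
  obtain ⟨z, hz, hvz⟩ := hS.exists_adj_of_notMem hvS
  obtain rfl | rfl : z = u ∨ z = w := (hv ▸ hvz : z ∈ ({u, w} : Set V))
  · exact absurd hz huS
  refine ⟨2, hz, ?_⟩
  rintro z' ⟨hz', rfl | rfl | rfl | rfl⟩
  exacts [absurd hz' hvS, absurd hz' huS, rfl, absurd hww' (hS.1 hz hz')]

end Branching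

section Weighted

variable [Finite V] {θ ρ : ℝ}

lemma mis_le_of_neighborSet_eq_empty (hθ : 1 ≤ θ) (hρ : 1 ≤ ρ) {v : V}
    (hv : G.neighborSet v = ∅)
    (ih : ∀ D : Set V, D.Nonempty → (mis (G.induce Dᶜ) : ℝ) ≤
      θ ^ (Nat.card V - D.ncard) * ρ ^ (isolatedEdgeVerts (G.induce Dᶜ)).ncard) :
    (mis G : ℝ) ≤ θ ^ Nat.card V * ρ ^ (isolatedEdgeVerts G).ncard := by
  have hk : (isolatedEdgeVerts (G.induce {v}ᶜ)).ncard ≤ (isolatedEdgeVerts G).ncard :=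
    (ncard_isolatedEdgeVerts_induce_compl_le_of_closed (by rintro x rfl; simp [hv])).trans
      (Set.ncard_le_ncard Set.sdiff_subset)
  calc (mis G : ℝ) ≤ mis (G.induce {v}ᶜ) := by exact_mod_cast mis_le_mis_induce_compl_singleton hv
    _ ≤ θ ^ (Nat.card V - 1) * ρ ^ (isolatedEdgeVerts (G.induce {v}ᶜ)).ncard := by
        simpa using ih {v} (Set.singleton_nonempty v)
    _ ≤ θ ^ Nat.card V * ρ ^ (isolatedEdgeVerts G).ncard := by
        gcongr
        exact Nat.sub_le _ _

lemma mis_le_of_isIsolatedEdge (hθ : 0 ≤ θ) (hρ : 1 ≤ ρ) (hθρ : θ ^ 2 * ρ ^ 2 = 2) {x y : V}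
    (hxy : IsIsolatedEdge G x y)
    (ih : ∀ D : Set V, D.Nonempty → (mis (G.induce Dᶜ) : ℝ) ≤
      θ ^ (Nat.card V - D.ncard) * ρ ^ (isolatedEdgeVerts (G.induce Dᶜ)).ncard) :
    (mis G : ℝ) ≤ θ ^ Nat.card V * ρ ^ (isolatedEdgeVerts G).ncard := by
  set D : Set V := {x, y}
  have hD : D.ncard = 2 := Set.ncard_pair hxy.adj.ne
  have hn : 2 ≤ Nat.card V := hD ▸ Set.ncard_le_card D
  have hk : (isolatedEdgeVerts (G.induce Dᶜ)).ncard + 2 ≤ (isolatedEdgeVerts G).ncard := by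
    have hsub : D ⊆ isolatedEdgeVerts G := by
      rintro z (rfl | rfl)
      exacts [⟨_, hxy⟩, ⟨_, hxy.2, hxy.1⟩]
    have hclosed : ∀ z ∈ D, G.neighborSet z ⊆ D := by
      rintro z (rfl | rfl) <;> simp [hxy.1, hxy.2, D]
    have := ncard_isolatedEdgeVerts_induce_compl_le_of_closed hclosed
    rw [Set.ncard_sdiff hsub] at this
    have := Set.ncard_le_ncard hsub
    omega
  calc (mis G : ℝ) ≤ 2 * mis (G.induce Dᶜ) := by exact_mod_cast mis_le_two_mul_of_isIsolatedEdge hxy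
    _ ≤ 2 * (θ ^ (Nat.card V - 2) * ρ ^ (isolatedEdgeVerts (G.induce Dᶜ)).ncard) := by
        gcongr
        exact hD ▸ ih D (Set.insert_nonempty x {y})
    _ = θ ^ Nat.card V * ρ ^ ((isolatedEdgeVerts (G.induce Dᶜ)).ncard + 2) := by
        rw [← hθρ, ← pow_sub_mul_pow θ hn]
        ring
    _ ≤ θ ^ Nat.card V * ρ ^ (isolatedEdgeVerts G).ncard := by gcongr

lemma mis_le_of_neighborSet_eq_singleton (hθ : 0 ≤ θ) (hρ : 1 ≤ ρ)
    (hleaf : ρ ^ 18 * (θ + 1) ≤ θ ^ 3) (hdeg : ∀ v, (G.neighborSet v).ncard ≤ 2)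
    (hK : isolatedEdgeVerts G = ∅) {v u : V} (hv : G.neighborSet v = {u})
    (ih : ∀ D : Set V, D.Nonempty → (mis (G.induce Dᶜ) : ℝ) ≤
      θ ^ (Nat.card V - D.ncard) * ρ ^ (isolatedEdgeVerts (G.induce Dᶜ)).ncard) :
    (mis G : ℝ) ≤ θ ^ Nat.card V := by
  have hvu : G.Adj v u := by simp [← G.mem_neighborSet, hv]
  obtain ⟨w, hwv, huw⟩ : ∃ w, w ≠ v ∧ G.Adj u w := by
    by_contra! h
    have hu : G.neighborSet u = {v} :=
      Set.eq_singleton_iff_unique_mem.2 ⟨hvu.symm, fun w hw => by_contra fun hwv => h w hwv hw⟩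
    exact (hK ▸ ⟨u, hv, hu⟩ : v ∈ (∅ : Set V))
  have hD₁ : ({v, u} : Set V).ncard = 2 := Set.ncard_pair hvu.ne
  have hD₂ : ({v, u, w} : Set V).ncard = 3 :=
    Set.ncard_eq_three.2 ⟨v, u, w, hvu.ne, hwv.symm, huw.ne, rfl⟩
  have hn : 3 ≤ Nat.card V := hD₂ ▸ Set.ncard_le_card _
  have branch_le : ∀ D : Set V, D.Nonempty → D.ncard ≤ 3 →
      (mis (G.induce Dᶜ) : ℝ) ≤ θ ^ (Nat.card V - D.ncard) * ρ ^ 18 := by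
    intro D hne hD
    have hk := ncard_isolatedEdgeVerts_induce_compl_le hdeg D
    rw [hK, Set.ncard_empty] at hk
    exact (ih D hne).trans (by gcongr; omega)
  calc (mis G : ℝ) ≤ mis (G.induce {v, u}ᶜ) + mis (G.induce {v, u, w}ᶜ) := by
        exact_mod_cast mis_le_add_of_neighborSet_eq_singleton hv
          (neighborSet_eq_pair (hdeg u) hvu.symm huw hwv.symm)
    _ ≤ θ ^ (Nat.card V - 2) * ρ ^ 18 + θ ^ (Nat.card V - 3) * ρ ^ 18 := by
        gcongr
        · exact hD₁ ▸ branch_le _ (Set.insert_nonempty _ _) (by omega)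
        · exact hD₂ ▸ branch_le _ (Set.insert_nonempty _ _) hD₂.le
    _ = θ ^ (Nat.card V - 3) * (ρ ^ 18 * (θ + 1)) := by
        rw [show Nat.card V - 2 = Nat.card V - 3 + 1 by omega]
        ring
    _ ≤ θ ^ (Nat.card V - 3) * θ ^ 3 := by gcongr
    _ = θ ^ Nat.card V := pow_sub_mul_pow θ hn

lemma mis_le_of_forall_ncard_neighborSet_eq_two (hθ : 0 ≤ θ) (hρ : 1 ≤ ρ)
    (hcycle : ρ ^ 8 * (2 * θ + 1) ≤ θ ^ 4) (htf : G.CliqueFree 3)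
    (hdeg : ∀ v, (G.neighborSet v).ncard = 2) (v : V)
    (ih : ∀ D : Set V, D.Nonempty → (mis (G.induce Dᶜ) : ℝ) ≤
      θ ^ (Nat.card V - D.ncard) * ρ ^ (isolatedEdgeVerts (G.induce Dᶜ)).ncard) :
    (mis G : ℝ) ≤ θ ^ Nat.card V := by
  obtain ⟨u, w, huw, hv⟩ := Set.ncard_eq_two.1 (hdeg v)
  have hvu : G.Adj v u := by simp [← G.mem_neighborSet, hv]
  have hvw : G.Adj v w := by simp [← G.mem_neighborSet, hv]
  obtain ⟨u', hu'v, hu⟩ := exists_neighborSet_eq_pair (hdeg u) hvu.symm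
  obtain ⟨w', hw'v, hw⟩ := exists_neighborSet_eq_pair (hdeg w) hvw.symm
  have huu' : G.Adj u u' := by simp [← G.mem_neighborSet, hu]
  have hww' : G.Adj w w' := by simp [← G.mem_neighborSet, hw]
  have hw'u : w' ≠ u := by
    rintro rfl
    exact SimpleGraph.isIndepSet_neighborSet_of_triangleFree G htf w hvw.symm hww' hw'v.symm hvu
  have hD₁ : ({v, u, w} : Set V).ncard = 3 :=
    Set.ncard_eq_three.2 ⟨v, u, w, hvu.ne, hvw.ne, huw, rfl⟩
  have hD₂ : ({v, u, u'} : Set V).ncard = 3 :=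
    Set.ncard_eq_three.2 ⟨v, u, u', hvu.ne, hu'v.symm, huu'.ne, rfl⟩
  have hD₃ : ({v, u, w, w'} : Set V).ncard = 4 := by
    rw [Set.ncard_insert_of_notMem (by simp [hvu.ne, hvw.ne, hw'v.symm]),
      Set.ncard_eq_three.2 ⟨u, w, w', huw, hw'u.symm, hww'.ne, rfl⟩]
  have hn : 4 ≤ Nat.card V := hD₃ ▸ Set.ncard_le_card _
  have branch_le : ∀ D : Set V, D.Nonempty → D.ncard ≤ 4 →
      (mis (G.induce Dᶜ) : ℝ) ≤ θ ^ (Nat.card V - D.ncard) * ρ ^ 8 := fun D hne hD =>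
    (ih D hne).trans <| by
      gcongr
      linarith [ncard_isolatedEdgeVerts_induce_compl_le_of_forall_ncard_eq_two hdeg D]
  calc (mis G : ℝ) ≤ mis (G.induce {v, u, w}ᶜ) + mis (G.induce {v, u, u'}ᶜ) +
        mis (G.induce {v, u, w, w'}ᶜ) := by
        exact_mod_cast mis_le_add_add_of_neighborSet_eq_pair hv hu hw
    _ ≤ θ ^ (Nat.card V - 3) * ρ ^ 8 + θ ^ (Nat.card V - 3) * ρ ^ 8 +
          θ ^ (Nat.card V - 4) * ρ ^ 8 := by
        gcongr
        · exact hD₁ ▸ branch_le _ (Set.insert_nonempty _ _) (by omega)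
        · exact hD₂ ▸ branch_le _ (Set.insert_nonempty _ _) (by omega)
        · exact hD₃ ▸ branch_le _ (Set.insert_nonempty _ _) hD₃.le
    _ = θ ^ (Nat.card V - 4) * (ρ ^ 8 * (2 * θ + 1)) := by
        rw [show Nat.card V - 3 = Nat.card V - 4 + 1 by omega]
        ring
    _ ≤ θ ^ (Nat.card V - 4) * θ ^ 4 := by gcongr
    _ = θ ^ Nat.card V := pow_sub_mul_pow θ hn

end Weighted

/-- The exponents `18 = 6 * 3` and `8 = 2 * 4` bound the isolated-edge vertices created by the
branches at a leaf and at a vertex of degree two. -/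
theorem mis_le_pow_card_mul_pow {θ ρ : ℝ} (hθ : 1 ≤ θ) (hρ : 1 ≤ ρ) (hθρ : θ ^ 2 * ρ ^ 2 = 2)
    (hleaf : ρ ^ 18 * (θ + 1) ≤ θ ^ 3) (hcycle : ρ ^ 8 * (2 * θ + 1) ≤ θ ^ 4)
    [Finite V] (htf : G.CliqueFree 3)
    (hdeg : ∀ v, (G.neighborSet v).ncard ≤ 2) :
    (mis G : ℝ) ≤ θ ^ Nat.card V * ρ ^ (isolatedEdgeVerts G).ncard := by
  induction hn : Nat.card V using Nat.strong_induction_on generalizing V with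
  | _ n ih =>
  subst hn
  have ih' : ∀ D : Set V, D.Nonempty → (mis (G.induce Dᶜ) : ℝ) ≤
      θ ^ (Nat.card V - D.ncard) * ρ ^ (isolatedEdgeVerts (G.induce Dᶜ)).ncard := by
    intro D hD
    have hcard : Nat.card ↥Dᶜ = Nat.card V - D.ncard :=
      (Nat.card_coe_set_eq _).trans (Set.ncard_compl D)
    have hpos : 0 < D.ncard := (Set.ncard_pos (Set.toFinite D)).2 hD
    have hle := Set.ncard_le_card D
    rw [← hcard]
    exact ih _ (by omega) (G := G.induce Dᶜ) (htf.comap ⟨SimpleGraph.Copy.induce G _⟩)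
      (fun x => (ncard_neighborSet_induce_le _ x).trans (hdeg x)) rfl
  have hθ0 : 0 ≤ θ := zero_le_one.trans hθ
  rcases isEmpty_or_nonempty V with hV | ⟨⟨v⟩⟩
  · rw [Nat.card_of_isEmpty, Subsingleton.elim (isolatedEdgeVerts G) ∅, Set.ncard_empty,
      pow_zero, pow_zero, mul_one]
    exact_mod_cast mis_le_one_of_isEmpty
  by_cases hedge : ∃ x y, IsIsolatedEdge G x y
  · obtain ⟨x, y, hxy⟩ := hedge
    exact mis_le_of_isIsolatedEdge hθ0 hρ hθρ hxy ih'
  have hK : isolatedEdgeVerts G = ∅ := by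
    simpa [Set.eq_empty_iff_forall_notMem, isolatedEdgeVerts] using hedge
  by_cases hisolated : ∃ v, G.neighborSet v = ∅
  · obtain ⟨v, hv⟩ := hisolated
    exact mis_le_of_neighborSet_eq_empty hθ hρ hv ih'
  rw [hK, Set.ncard_empty, pow_zero, mul_one]
  by_cases hpendant : ∃ v u, G.neighborSet v = {u}
  · obtain ⟨v, u, hv⟩ := hpendant
    exact mis_le_of_neighborSet_eq_singleton hθ0 hρ hleaf hdeg hK hv ih'
  refine mis_le_of_forall_ncard_neighborSet_eq_two hθ0 hρ hcycle htf (fun x => ?_) v ih'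
  have h0 : (G.neighborSet x).ncard ≠ 0 := fun h =>
    hisolated ⟨x, (Set.ncard_eq_zero (Set.toFinite _)).1 h⟩
  have h1 : (G.neighborSet x).ncard ≠ 1 := fun h => hpendant ⟨x, Set.ncard_eq_one.1 h⟩
  have := hdeg x
  omega

end

lemma mem_Ioo_of_one_add_eq_cube {γ : ℝ} (hγ : 1 + γ = γ ^ 3) : γ ∈ Set.Ioo 1.32 1.33 := by
  constructor <;> nlinarith [sq_nonneg (γ + 0.66), sq_nonneg γ, sq_nonneg (γ - 1.32),
    sq_nonneg (γ - 1.33)]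

lemma mem_Ioo_of_pow_four_eq {γ θ : ℝ} (hγ : 1 + γ = γ ^ 3) (hθ : 0 ≤ θ) (hθγ : θ ^ 4 = 3 * γ) :
    θ ∈ Set.Ioo 1.41 1.414 := by
  obtain ⟨hγ₁, hγ₂⟩ := mem_Ioo_of_one_add_eq_cube hγ
  constructor
  · exact lt_of_pow_lt_pow_left₀ 4 hθ (by rw [hθγ]; norm_num; linarith)
  · exact lt_of_pow_lt_pow_left₀ 4 (by norm_num) (by rw [hθγ]; norm_num; linarith)

lemma sqrt_two_div_weight_bounds {θ : ℝ} (h₁ : 1.41 < θ) (h₂ : θ < 1.414) :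
    1 ≤ √2 / θ ∧ θ ^ 2 * (√2 / θ) ^ 2 = 2 ∧ (√2 / θ) ^ 18 * (θ + 1) ≤ θ ^ 3 ∧
      (√2 / θ) ^ 8 * (2 * θ + 1) ≤ θ ^ 4 := by
  have hθ : 0 < θ := by linarith
  have hρ2 : (√2 / θ) ^ 2 = 2 / θ ^ 2 := by rw [div_pow, Real.sq_sqrt zero_le_two]
  refine ⟨(one_le_div hθ).2 ((Real.le_sqrt hθ.le zero_le_two).2 (by nlinarith)), ?_, ?_, ?_⟩
  · rw [hρ2]; field_simp
  · rw [show (√2 / θ) ^ 18 = ((√2 / θ) ^ 2) ^ 9 by ring, hρ2, div_pow, div_mul_eq_mul_div,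
      div_le_iff₀ (by positivity)]
    have h := pow_le_pow_left₀ (by norm_num) h₁.le 21
    nlinarith
  · rw [show (√2 / θ) ^ 8 = ((√2 / θ) ^ 2) ^ 4 by ring, hρ2, div_pow, div_mul_eq_mul_div,
      div_le_iff₀ (by positivity)]
    have h := pow_le_pow_left₀ (by norm_num) h₁.le 12
    nlinarith

theorem mis_le_of_max_degree_two (γ : ℝ) (hγ : 1 + γ = γ ^ 3)
    (V : Type*) [Fintype V] (R : SimpleGraph V) [DecidableRel R.Adj]
    (htf : R.CliqueFree 3) (hdeg : ∀ v : V, R.degree v ≤ 2)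
    (hnoedge : ∀ x y : V, R.Adj x y →
      ∃ z : V, (R.Adj x z ∧ z ≠ y) ∨ (R.Adj y z ∧ z ≠ x)) :
    (mis R : ℝ) ≤ (3 * γ) ^ ((Fintype.card V : ℝ) / 4) := by
  have h3γ : 0 ≤ 3 * γ := by linarith [(mem_Ioo_of_one_add_eq_cube hγ).1]
  set θ := (3 * γ) ^ ((1 : ℝ) / 4)
  have hθγ : θ ^ 4 = 3 * γ := by
    rw [← Real.rpow_natCast, ← Real.rpow_mul h3γ]
    norm_num
  obtain ⟨hθ₁, hθ₂⟩ := mem_Ioo_of_pow_four_eq hγ (by positivity) hθγ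
  obtain ⟨hρ, hθρ, hleaf, hcycle⟩ := sqrt_two_div_weight_bounds hθ₁ hθ₂
  have hdeg' : ∀ v, (R.neighborSet v).ncard ≤ 2 := fun v => by
    rw [← Nat.card_coe_set_eq, Nat.card_eq_fintype_card, SimpleGraph.card_neighborSet_eq_degree]
    exact hdeg v
  have h := mis_le_pow_card_mul_pow (by linarith) hρ hθρ hleaf hcycle htf hdeg'
  rwa [isolatedEdgeVerts_eq_empty hnoedge, Set.ncard_empty, pow_zero, mul_one,
    Nat.card_eq_fintype_card, ← Real.rpow_natCast, ← Real.rpow_mul h3γ, one_div_mul_eq_div] at h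
end

section
/- Let γ be the unique real solution of 1 + γ = γ³. For every n ≥ 2, the path P_n on n vertices satisfies mis(P_n) ≤ 2·γ^{n−2}. -/
/-! Every maximal independent set `s` of `P_{n+3}` contains exactly one of the last two vertices.
If it contains the last one, it misses the one before and restricts to a maximal independent set of
`P_{n+1}`; otherwise it contains `n + 1`, misses `n`, and restricts to one of `P_n`. Since `s` is
recovered from its restriction, `mis P_{n+3} ≤ mis P_{n+1} + mis P_n`, and a sequence with this
Padovan-type recurrence is bounded by `c γ^n` as soon as its first three terms are, because
`γ^{n+3} = γ^{n+1} + γ^n`. -/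

open SimpleGraph (pathGraph pathGraph_adj)

lemma isMaxIndepSet_iff {V : Type*} (G : SimpleGraph V) (s : Set V) :
    IsMaxIndepSet G s ↔ IsIndepSet G s ∧ ∀ v ∉ s, ∃ u ∈ s, G.Adj u v := by
  refine ⟨fun ⟨hs, hmax⟩ => ⟨hs, fun v hv => ?_⟩, fun ⟨hs, hdom⟩ => ⟨hs, fun t ht hst => ?_⟩⟩
  · by_contra! hfree
    have hins : IsIndepSet G (insert v s) := by
      rintro x (rfl | hx) y (rfl | hy) hxy
      · exact G.irrefl hxy
      · exact hfree y hy hxy.symm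
      · exact hfree x hx hxy
      · exact hs hx hy hxy
    exact hv ((hmax _ hins (Set.subset_insert v s)).symm ▸ Set.mem_insert v s)
  · refine hst.antisymm fun x hx => ?_
    by_contra hxs
    obtain ⟨u, hu, hux⟩ := hdom x hxs
    exact ht (hst hu) hx hux

lemma mis_eq_card_finset {V : Type*} [Fintype V] [DecidableEq V] (G : SimpleGraph V)
    [DecidableRel G.Adj] :
    mis G = Fintype.card {t : Finset V //
      (∀ x ∈ t, ∀ y ∈ t, ¬ G.Adj x y) ∧ ∀ v, v ∉ t → ∃ u ∈ t, G.Adj u v} := by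
  rw [mis, ← Nat.card_eq_fintype_card]
  refine Nat.card_congr ((Equiv.subtypeEquivRight (isMaxIndepSet_iff G)).trans ?_)
  refine (Fintype.finsetEquivSet.subtypeEquiv fun t => ?_).symm
  simp [IsIndepSet]

instance (n : ℕ) : DecidableRel (pathGraph n).Adj :=
  fun _ _ => decidable_of_iff _ pathGraph_adj.symm

lemma mis_pathGraph_zero : mis (pathGraph 0) = 1 := by
  rw [mis_eq_card_finset]; decide

lemma mis_pathGraph_one : mis (pathGraph 1) = 1 := by
  rw [mis_eq_card_finset]; decide

lemma mis_pathGraph_two : mis (pathGraph 2) = 2 := by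
  rw [mis_eq_card_finset]; decide

lemma pathGraph_adj_castLE {m N : ℕ} (h : m ≤ N) {u v : Fin m} :
    (pathGraph N).Adj (Fin.castLE h u) (Fin.castLE h v) ↔ (pathGraph m).Adj u v := by
  simp [pathGraph_adj]

lemma IsMaxIndepSet.preimage_castLE {m N : ℕ} {s : Set (Fin N)}
    (hs : IsMaxIndepSet (pathGraph N) s) (h : m < N) (hm : (⟨m, h⟩ : Fin N) ∉ s) :
    IsMaxIndepSet (pathGraph m) (Fin.castLE h.le ⁻¹' s) := by
  obtain ⟨hind, hdom⟩ := (isMaxIndepSet_iff _ _).mp hs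
  refine (isMaxIndepSet_iff _ _).mpr
    ⟨fun x hx y hy hxy => hind hx hy ((pathGraph_adj_castLE _).mpr hxy), fun v hv => ?_⟩
  obtain ⟨u, hu, huv⟩ := hdom _ hv
  have huv' := pathGraph_adj.mp huv
  simp only [Fin.val_castLE] at huv'
  -- a neighbour of `v < m` other than `m` lies below `m`
  have hum : u.val ≠ m := fun hum => hm (by rwa [show u = ⟨m, h⟩ from Fin.ext hum] at hu)
  exact ⟨⟨u, by omega⟩, hu, pathGraph_adj.mpr (by simpa using huv')⟩

lemma Fin.eq_of_preimage_castLE_eq {m N : ℕ} (h : m ≤ N) {s t : Set (Fin N)}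
    (hlow : Fin.castLE h ⁻¹' s = Fin.castLE h ⁻¹' t)
    (hhigh : ∀ v : Fin N, m ≤ v → (v ∈ s ↔ v ∈ t)) : s = t := by
  ext v
  rcases lt_or_ge v.val m with hv | hv
  · exact Set.ext_iff.mp hlow ⟨v, hv⟩
  · exact hhigh v hv

lemma IsMaxIndepSet.pathGraph_mem_iff_of_last_mem {n : ℕ} {s : Set (Fin (n + 3))}
    (hs : IsMaxIndepSet (pathGraph (n + 3)) s) (hlast : Fin.last (n + 2) ∈ s)
    (v : Fin (n + 3)) (hv : n + 1 ≤ v) : v ∈ s ↔ v = Fin.last (n + 2) := by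
  refine ⟨fun hvs => ?_, fun hvl => hvl ▸ hlast⟩
  by_contra hvl
  have hvl' : v.val ≠ n + 2 := fun h => hvl (Fin.ext h)
  exact hs.1 hvs hlast (pathGraph_adj.mpr (by simp only [Fin.val_last]; omega))

lemma IsMaxIndepSet.pathGraph_mem_iff_of_last_not_mem {n : ℕ} {s : Set (Fin (n + 3))}
    (hs : IsMaxIndepSet (pathGraph (n + 3)) s) (hlast : Fin.last (n + 2) ∉ s)
    (v : Fin (n + 3)) (hv : n ≤ v) : v ∈ s ↔ v.val = n + 1 := by
  obtain ⟨u, hu, hul⟩ := ((isMaxIndepSet_iff _ _).mp hs).2 _ hlast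
  have hun : u.val = n + 1 := by
    have := pathGraph_adj.mp hul; simp only [Fin.val_last] at this; omega
  refine ⟨fun hvs => ?_, fun hvn => by rwa [show v = u from Fin.ext (hvn.trans hun.symm)]⟩
  rcases (by omega : v.val = n ∨ v.val = n + 1 ∨ v.val = n + 2) with h | h | h
  · exact absurd (pathGraph_adj.mpr (by omega)) (hs.1 hvs hu)
  · exact h
  · exact (hlast (by rwa [show v = Fin.last (n + 2) from Fin.ext (by simp [h])] at hvs)).elim

lemma mis_pathGraph_add_three_le (n : ℕ) :
    mis (pathGraph (n + 3)) ≤ mis (pathGraph (n + 1)) + mis (pathGraph n) := by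
  classical
  let F : {s : Set (Fin (n + 3)) // IsMaxIndepSet (pathGraph (n + 3)) s} →
      {s : Set (Fin (n + 1)) // IsMaxIndepSet (pathGraph (n + 1)) s} ⊕
        {s : Set (Fin n) // IsMaxIndepSet (pathGraph n) s} := fun s =>
    if h : Fin.last (n + 2) ∈ s.1 then
      .inl ⟨_, s.2.preimage_castLE (by omega) <| by
        rw [s.2.pathGraph_mem_iff_of_last_mem h _ le_rfl]; simp [Fin.ext_iff]⟩
    else
      .inr ⟨_, s.2.preimage_castLE (by omega) <| by
        rw [s.2.pathGraph_mem_iff_of_last_not_mem h _ le_rfl]; simp⟩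
  have hF : Function.Injective F := by
    rintro ⟨s, hs⟩ ⟨t, ht⟩ hst
    refine Subtype.ext ?_
    by_cases hsl : Fin.last (n + 2) ∈ s <;> by_cases htl : Fin.last (n + 2) ∈ t <;>
      simp only [F, hsl, htl, dite_true, dite_false, reduceCtorEq, Sum.inl.injEq, Sum.inr.injEq,
        Subtype.mk.injEq] at hst
    · exact Fin.eq_of_preimage_castLE_eq _ hst fun v hv => by
        rw [hs.pathGraph_mem_iff_of_last_mem hsl v hv, ht.pathGraph_mem_iff_of_last_mem htl v hv]
    · exact Fin.eq_of_preimage_castLE_eq _ hst fun v hv => by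
        rw [hs.pathGraph_mem_iff_of_last_not_mem hsl v hv,
          ht.pathGraph_mem_iff_of_last_not_mem htl v hv]
  simpa only [mis, Nat.card_sum] using Nat.card_le_card_of_injective F hF

lemma le_mul_pow_of_le_add {γ c : ℝ} (hγ : 1 + γ = γ ^ 3) {u : ℕ → ℝ}
    (hu : ∀ n, u (n + 3) ≤ u (n + 1) + u n) (h₀ : u 0 ≤ c) (h₁ : u 1 ≤ c * γ)
    (h₂ : u 2 ≤ c * γ ^ 2) (n : ℕ) : u n ≤ c * γ ^ n := by
  induction n using Nat.strong_induction_on with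
  | _ n ih =>
    match n with
    | 0 => simpa using h₀
    | 1 => simpa using h₁
    | 2 => exact h₂
    | n + 3 =>
      calc u (n + 3) ≤ u (n + 1) + u n := hu n
        _ ≤ c * γ ^ (n + 1) + c * γ ^ n := add_le_add (ih _ (by omega)) (ih _ (by omega))
        _ = c * γ ^ (n + 3) := by rw [pow_add γ n 3, ← hγ]; ring

theorem mis_pathGraph_le_general (γ : ℝ) (hγ : 1 + γ = γ ^ 3) (n : ℕ) :
    (mis (SimpleGraph.pathGraph n) : ℝ) ≤ 2 * γ ^ (n - 2) := by
  -- `γ ≈ 1.3247`; the base cases `mis P₃ ≤ 2`, `mis P₄ ≤ 3` need `γ ≥ 1` and `γ² ≥ 3/2`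
  have hγ_ge : (5 / 4 : ℝ) ≤ γ := by nlinarith [sq_nonneg (γ + 5 / 8), sq_nonneg γ]
  have h₃ : (mis (pathGraph 3) : ℝ) ≤ 2 := by
    exact_mod_cast (by simpa [mis_pathGraph_zero, mis_pathGraph_one] using
      mis_pathGraph_add_three_le 0)
  have h₄ : (mis (pathGraph 4) : ℝ) ≤ 3 := by
    exact_mod_cast (by simpa [mis_pathGraph_one, mis_pathGraph_two] using
      mis_pathGraph_add_three_le 1)
  have hbound := le_mul_pow_of_le_add hγ (c := 2) (u := fun k => (mis (pathGraph (k + 2)) : ℝ))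
    (fun k => by exact_mod_cast mis_pathGraph_add_three_le (k + 2))
    (by simp [mis_pathGraph_two]) (show (mis (pathGraph 3) : ℝ) ≤ 2 * γ by nlinarith)
    (show (mis (pathGraph 4) : ℝ) ≤ 2 * γ ^ 2 by nlinarith)
  rcases Nat.lt_or_ge n 2 with hn | hn
  · interval_cases n <;> norm_num [mis_pathGraph_zero, mis_pathGraph_one]
  · obtain ⟨k, rfl⟩ := Nat.exists_eq_add_of_le' hn
    simpa using hbound k

theorem mis_pathGraph_le (γ : ℝ) (hγ : 1 + γ = γ ^ 3) (n : ℕ) (hn : 2 ≤ n) :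
    (mis (SimpleGraph.pathGraph n) : ℝ) ≤ 2 * γ ^ (n - 2) :=
  mis_pathGraph_le_general γ hγ n
end
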